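/- arXiv:2602.07693 — 10 statements merged into one kernel-verified Lean document; each statement's English description precedes it below -/
import Mathlib

section
/- Let ℓ be an odd prime, let n ≥ 1 be an integer coprime to ℓ, and set g := (ℓ−1)/2. Let p be a prime with gcd(p, nℓ) = 1 such that the multiplicative order of p modulo ℓ equals g and the multiplicative order of p modulo n is coprime to g. Consider the action on the nonzero residues a of ℤ/(nℓ)ℤ given by multiplication by p. Then: (i) if a and b are nonzero residues modulo nℓ with a ≡ b (mod n) and with equal Legendre symbols (a/ℓ) = (b/ℓ), then there exists k ≥ 0 with b = p^k · a in ℤ/(nℓ)ℤ; and (ii) if a and b are nonzero residues modulo nℓ lying in the same orbit (i.e., b = p^k · a in ℤ/(nℓ)ℤ for some k ≥ 0), then (a/ℓ) = (b/ℓ). -/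
set_option maxHeartbeats 1000000

open Subgroup Finset in
lemma aux_mem_powers_of_cyclic {G : Type*} [Group G] [Fintype G] [IsCyclic G] [DecidableEq G]
    {u c : G} (hg : 0 < orderOf u) (hc : c ^ orderOf u = 1) : ∃ j : ℕ, u ^ j = c := by
  classical
  set S : Finset G := {a : G | a ^ orderOf u = 1} with hSdef
  have hS : S.card ≤ orderOf u := IsCyclic.card_pow_eq_one_le hg
  set T : Finset G := (Subgroup.zpowers u : Set G).toFinset with hT
  have hsub : T ⊆ S := by
    intro x hx
    rw [hT, Set.mem_toFinset] at hx
    have := orderOf_dvd_of_mem_zpowers hx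
    rw [hSdef]
    simp only [Finset.mem_filter, Finset.mem_univ, true_and, Set.mem_setOf_eq]
    simpa using orderOf_dvd_iff_pow_eq_one.mp this
  have hcardT : T.card = orderOf u := by
    rw [hT, Set.toFinset_card]
    exact Fintype.card_zpowers
  have hTeq : T = S := Finset.eq_of_subset_of_card_le hsub (by omega)
  have hcT : c ∈ T := by
    rw [hTeq, hSdef]
    simpa using hc
  rw [hT, Set.mem_toFinset] at hcT
  exact mem_powers_iff_mem_zpowers.mpr hcT

lemma aux_pow_eq_pow_of_modEq {M : Type*} [Monoid M] {x : M} {g k j : ℕ}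
    (hg : x ^ g = 1) (h : k ≡ j [MOD g]) : x ^ k = x ^ j := by
  have hred : ∀ m : ℕ, x ^ m = x ^ (m % g) := by
    intro m
    conv_lhs => rw [← Nat.div_add_mod m g]
    rw [pow_add, pow_mul, hg, one_pow, one_mul]
  rw [hred k, hred j, h]

theorem statement2 (ℓ : ℕ) [Fact ℓ.Prime] (hℓ2 : ℓ ≠ 2) (n : ℕ) (hn : 1 ≤ n)
    (hcop : Nat.Coprime n ℓ) (p : ℕ) (hp : p.Prime)
    (hpcop : Nat.Coprime p (n * ℓ))
    (hordℓ : orderOf ((p : ZMod ℓ)) = (ℓ - 1) / 2)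
    (hordn : Nat.Coprime (orderOf ((p : ZMod n))) ((ℓ - 1) / 2)) :
    (∀ a b : ZMod (n * ℓ), a ≠ 0 → b ≠ 0 → a.val ≡ b.val [MOD n] →
        legendreSym ℓ (a.val) = legendreSym ℓ (b.val) →
        ∃ k : ℕ, b = (p : ZMod (n * ℓ)) ^ k * a) ∧
    (∀ a b : ZMod (n * ℓ), a ≠ 0 → b ≠ 0 →
        (∃ k : ℕ, b = (p : ZMod (n * ℓ)) ^ k * a) →
        legendreSym ℓ (a.val) = legendreSym ℓ (b.val)) := by
  have hℓ : ℓ.Prime := Fact.out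
  have hℓ3 : 3 ≤ ℓ := by have := hℓ.two_le; omega
  have hℓodd : ℓ % 2 = 1 := (Nat.Prime.mod_two_eq_one_iff_ne_two hℓ).mpr hℓ2
  have hl2 : ℓ / 2 = (ℓ - 1) / 2 := by omega
  have hgpos : 0 < (ℓ - 1) / 2 := by omega
  haveI : NeZero (n * ℓ) := ⟨by positivity⟩
  have hdn : n ∣ n * ℓ := dvd_mul_right n ℓ
  have hdl : ℓ ∣ n * ℓ := dvd_mul_left ℓ n
  set f₁ : ZMod (n * ℓ) →+* ZMod n := ZMod.castHom hdn (ZMod n) with hf₁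
  set f₂ : ZMod (n * ℓ) →+* ZMod ℓ := ZMod.castHom hdl (ZMod ℓ) with hf₂
  have hval₁ : ∀ x : ZMod (n * ℓ), ((x.val : ℕ) : ZMod n) = f₁ x := by
    intro x; rw [ZMod.natCast_val, hf₁, ZMod.castHom_apply]
  have hval₂ : ∀ x : ZMod (n * ℓ), ((x.val : ℕ) : ZMod ℓ) = f₂ x := by
    intro x; rw [ZMod.natCast_val, hf₂, ZMod.castHom_apply]
  -- injectivity via CRT
  have eqiff : ∀ x y : ZMod (n * ℓ), f₁ x = f₁ y → f₂ x = f₂ y → x = y := by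
    intro x y h1 h2
    rw [← hval₁ x, ← hval₁ y] at h1
    rw [← hval₂ x, ← hval₂ y] at h2
    have m1 : x.val ≡ y.val [MOD n] := (ZMod.natCast_eq_natCast_iff _ _ _).mp h1
    have m2 : x.val ≡ y.val [MOD ℓ] := (ZMod.natCast_eq_natCast_iff _ _ _).mp h2
    have m : x.val ≡ y.val [MOD n * ℓ] :=
      (Nat.modEq_and_modEq_iff_modEq_mul hcop).mp ⟨m1, m2⟩
    have := (ZMod.natCast_eq_natCast_iff _ _ _).mpr m
    rwa [ZMod.natCast_val, ZMod.natCast_val, ZMod.cast_id, ZMod.cast_id] at this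
  -- legendre depends only on residue
  have hleg : ∀ x y : ℕ, (x : ZMod ℓ) = (y : ZMod ℓ) →
      legendreSym ℓ x = legendreSym ℓ y := by
    intro x y h
    simp only [legendreSym, Int.cast_natCast, h]
  have hplcop : Nat.Coprime p ℓ := Nat.Coprime.coprime_dvd_right hdl hpcop
  have hncop : Nat.Coprime p n := Nat.Coprime.coprime_dvd_right hdn hpcop
  have hpℓ : (p : ZMod ℓ) ≠ 0 := by
    have := (ZMod.unitOfCoprime p hplcop).isUnit
    rw [ZMod.coe_unitOfCoprime] at this
    exact this.ne_zero
  have hpg : (p : ZMod ℓ) ^ ((ℓ - 1) / 2) = 1 := by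
    rw [← hordℓ]; exact pow_orderOf_eq_one _
  have hlegp : legendreSym ℓ (p : ℤ) = 1 := by
    rw [legendreSym.eq_one_iff' ℓ (by exact_mod_cast hpℓ)]
    exact (ZMod.euler_criterion ℓ hpℓ).mpr (by rw [hl2]; exact hpg)
  -- Euler: legendre of val
  have heuler : ∀ x : ZMod (n * ℓ),
      ((legendreSym ℓ (x.val : ℤ) : ℤ) : ZMod ℓ) = (f₂ x) ^ ((ℓ - 1) / 2) := by
    intro x
    rw [legendreSym.eq_pow, hl2]
    congr 1
    rw [← hval₂ x]
    push_cast
    rfl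
  have hzero : ∀ x : ZMod (n * ℓ), legendreSym ℓ (x.val : ℤ) = 0 ↔ f₂ x = 0 := by
    intro x
    rw [legendreSym.eq_zero_iff, ← hval₂ x]
    constructor
    · intro h; exact_mod_cast h
    · intro h; exact_mod_cast h
  constructor
  · -- part (i)
    intro a b ha hb hmod hlegeq
    have hfa1 : f₁ b = f₁ a := by
      rw [← hval₁ a, ← hval₁ b]
      exact (ZMod.natCast_eq_natCast_iff _ _ _).mpr hmod.symm
    by_cases h0 : f₂ a = 0
    · have h0b : f₂ b = 0 := by
        rw [← hzero b, ← hlegeq, hzero a]; exact h0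
      refine ⟨0, ?_⟩
      rw [pow_zero, one_mul]
      exact eqiff b a hfa1 (h0b.trans h0.symm)
    · have h0b : f₂ b ≠ 0 := by
        intro hb0
        exact h0 (by rw [← hzero a, hlegeq, hzero b]; exact hb0)
      -- same g-th powers
      have hpow : (f₂ a) ^ ((ℓ - 1) / 2) = (f₂ b) ^ ((ℓ - 1) / 2) := by
        rw [← heuler a, ← heuler b, hlegeq]
      -- units
      set u : (ZMod ℓ)ˣ := ZMod.unitOfCoprime p hplcop with hu
      have huval : (u : ZMod ℓ) = p := ZMod.coe_unitOfCoprime p hplcop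
      have hordu : orderOf u = (ℓ - 1) / 2 := by
        rw [← orderOf_units, huval, hordℓ]
      set au : (ZMod ℓ)ˣ := Units.mk0 (f₂ a) h0 with hau
      set bu : (ZMod ℓ)ˣ := Units.mk0 (f₂ b) h0b with hbu
      have hcg : (bu * au⁻¹) ^ orderOf u = 1 := by
        ext
        rw [hordu]
        push_cast
        rw [hau, hbu]
        simp only [Units.val_mk0]
        rw [mul_pow, inv_pow, ← hpow]
        exact mul_inv_cancel₀ (pow_ne_zero _ h0)
      obtain ⟨j, hj⟩ := aux_mem_powers_of_cyclic (hordu ▸ hgpos) hcg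
      have hjval : (p : ZMod ℓ) ^ j * f₂ a = f₂ b := by
        have := congrArg (fun w : (ZMod ℓ)ˣ => (w * au : (ZMod ℓ)ˣ)) hj
        simp only [inv_mul_cancel_right] at this
        have := congrArg (Units.val) this
        push_cast at this
        rwa [huval, hau, hbu, Units.val_mk0, Units.val_mk0] at this
      -- choose k
      have hex : ∃ k : ℕ, k ≡ 0 [MOD orderOf ((p : ZMod n))] ∧ k ≡ j [MOD (ℓ - 1) / 2] :=
        ⟨(Nat.chineseRemainder hordn 0 j).val, (Nat.chineseRemainder hordn 0 j).prop⟩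
      obtain ⟨k, hk0, hkj⟩ := hex
      refine ⟨k, eqiff b ((p : ZMod (n * ℓ)) ^ k * a) ?_ ?_⟩
      · rw [map_mul, map_pow, map_natCast]
        have : (p : ZMod n) ^ k = (p : ZMod n) ^ 0 :=
          aux_pow_eq_pow_of_modEq (pow_orderOf_eq_one _) hk0
        rw [this, pow_zero, one_mul, hfa1]
      · rw [map_mul, map_pow, map_natCast]
        have : (p : ZMod ℓ) ^ k = (p : ZMod ℓ) ^ j :=
          aux_pow_eq_pow_of_modEq hpg hkj
        rw [this, hjval]
  · -- part (ii)
    intro a b ha hb ⟨k, hk⟩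
    have h2 : ((b.val : ℕ) : ZMod ℓ) = ((p ^ k * a.val : ℕ) : ZMod ℓ) := by
      rw [hval₂ b, hk, map_mul, map_pow, map_natCast]
      push_cast
      rw [hval₂ a]
    have := hleg _ _ h2
    rw [this]
    have hcast : ((p ^ k * a.val : ℕ) : ℤ) = (p : ℤ) ^ k * (a.val : ℤ) := by push_cast; ring
    rw [hcast, legendreSym.mul]
    have : legendreSym ℓ ((p : ℤ) ^ k) = 1 := by
      have := map_pow (legendreSym.hom ℓ) (p : ℤ) k
      simp only [legendreSym.hom_apply] at this
      rw [this, hlegp, one_pow]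
    rw [this, one_mul]
end

section
/- Let ℓ > 3 be a prime, let n ≥ 1 be an integer with gcd(n, ℓ) = 1, and let k be an integer with 0 ≤ k ≤ n−1 and kℓ ≡ −3 (mod n). Let i be an integer with 0 ≤ i ≤ 6n−1 and let j be an integer with 1 ≤ j ≤ nℓ−1, j ∈ I(i), and ℓ ∤ j. Then ⌈j(kℓ+3)/(nℓ)⌉ = ⌈(jk + ⌊(i+2)/2⌋)/n⌉. -/
/-- The interval `I(i)` partitioning the integers in `[1, nℓ - 1]`:
for even `i`, `I(i) = [⌊ℓ·(i/2)/3⌋ + 1, ⌊ℓ·(i/2 + ⌈(i+1)/6⌉)/4⌋]`, and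
for odd `i`, `I(i) = [⌊ℓ·((i−1)/2 + ⌈i/6⌉)/4⌋ + 1, ⌊ℓ·((i+1)/2)/3⌋]`. -/
noncomputable def intervalI (ℓ i : ℤ) : Finset ℤ :=
  if i % 2 = 0 then
    Finset.Icc (⌊(ℓ : ℝ) * ((i : ℝ) / 2) / 3⌋ + 1)
      ⌊(ℓ : ℝ) * ((i : ℝ) / 2 + (⌈((i : ℝ) + 1) / 6⌉ : ℝ)) / 4⌋
  else
    Finset.Icc (⌊(ℓ : ℝ) * (((i : ℝ) - 1) / 2 + (⌈(i : ℝ) / 6⌉ : ℝ)) / 4⌋ + 1)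
      ⌊(ℓ : ℝ) * (((i : ℝ) + 1) / 2) / 3⌋

theorem statement6 (ℓ n k i j : ℤ) (hℓp : Prime ℓ) (hℓ3 : 3 < ℓ) (hn : 1 ≤ n)
    (hcop : IsCoprime n ℓ) (hk0 : 0 ≤ k) (hk1 : k ≤ n - 1)
    (hkℓ : k * ℓ ≡ -3 [ZMOD n])
    (hi0 : 0 ≤ i) (hi1 : i ≤ 6 * n - 1) (hj1 : 1 ≤ j) (hj2 : j ≤ n * ℓ - 1)
    (hjI : j ∈ intervalI ℓ i) (hℓj : ¬ ℓ ∣ j) :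
    ⌈(j : ℝ) * ((k : ℝ) * (ℓ : ℝ) + 3) / ((n : ℝ) * (ℓ : ℝ))⌉
      = ⌈((j : ℝ) * (k : ℝ) + (⌊((i : ℝ) + 2) / 2⌋ : ℝ)) / (n : ℝ)⌉ := by
  have hℓ0 : (0:ℤ) < ℓ := by linarith
  have hn0 : (0:ℤ) < n := by linarith
  have hnR : (0:ℝ) < (n:ℝ) := by exact_mod_cast hn0
  have hℓR : (0:ℝ) < (ℓ:ℝ) := by exact_mod_cast hℓ0
  set c : ℤ := ⌊((i : ℝ) + 2) / 2⌋ with hc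
  -- core inequalities: (c-1)ℓ < 3j < cℓ
  have key : (c - 1) * ℓ < 3 * j ∧ 3 * j < c * ℓ := by
    rcases Int.even_or_odd i with ⟨m, hm⟩ | ⟨m, hm⟩
    · -- even case: i = 2m
      have him : i = 2 * m := by omega
      subst him
      have hmod : (2 * m) % 2 = 0 := by omega
      rw [intervalI, if_pos hmod, Finset.mem_Icc] at hjI
      obtain ⟨hlo, hhi⟩ := hjI
      have hcv : c = m + 1 := by
        rw [hc]
        have h : (((2 * m : ℤ) : ℝ) + 2) / 2 = ((m + 1 : ℤ) : ℝ) := by push_cast; ring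
        rw [h, Int.floor_intCast]
      have h1 := Int.floor_lt.mp (Int.lt_iff_add_one_le.mpr hlo)
      have h2 := Int.le_floor.mp hhi
      push_cast at h1 h2
      -- the ceiling term inside h2
      set tr : ℝ := (⌈(2 * (m:ℝ) + 1) / 6⌉ : ℝ) with htr
      have ht2 : tr < (2 * (m:ℝ) + 1) / 6 + 1 := by
        rw [htr]; exact_mod_cast Int.ceil_lt_add_one ((2 * (m:ℝ) + 1) / 6)
      have ht6 : (3 : ℝ) * tr ≤ (m : ℝ) + 3 := by
        have hti : ((6 * ⌈(2 * (m:ℝ) + 1) / 6⌉ : ℤ) : ℝ) < ((2 * m + 7 : ℤ) : ℝ) := by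
          push_cast; rw [htr] at ht2; push_cast at ht2 ⊢; linarith
        have hti' : 6 * ⌈(2 * (m:ℝ) + 1) / 6⌉ < 2 * m + 7 := by exact_mod_cast hti
        have hti'' : 3 * ⌈(2 * (m:ℝ) + 1) / 6⌉ ≤ m + 3 := by omega
        rw [htr]; exact_mod_cast hti''
      have hmul : (ℓ : ℝ) * (3 * tr) ≤ (ℓ : ℝ) * ((m : ℝ) + 3) :=
        mul_le_mul_of_nonneg_left ht6 hℓR.le
      rw [hcv]
      constructor
      · have hr : ((m * ℓ : ℤ) : ℝ) < ((3 * j : ℤ) : ℝ) := by push_cast; nlinarith [h1]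
        have := (by exact_mod_cast hr : m * ℓ < 3 * j)
        linarith
      · have hr : ((3 * j : ℤ) : ℝ) < (((m + 1) * ℓ : ℤ) : ℝ) := by
          push_cast; nlinarith [h2, hmul, hℓR]
        exact_mod_cast hr
    · -- odd case: i = 2m + 1
      have him : i = 2 * m + 1 := hm
      subst him
      have hmod : ¬ (2 * m + 1) % 2 = 0 := by omega
      rw [intervalI, if_neg hmod, Finset.mem_Icc] at hjI
      obtain ⟨hlo, hhi⟩ := hjI
      have hm0 : 0 ≤ m := by omega
      have hcv : c = m + 1 := by
        rw [hc, Int.floor_eq_iff]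
        constructor
        · push_cast; linarith
        · push_cast; linarith
      have h1 := Int.floor_lt.mp (Int.lt_iff_add_one_le.mpr hlo)
      have h2 := Int.le_floor.mp hhi
      push_cast at h1 h2
      set tr : ℝ := (⌈(2 * (m:ℝ) + 1) / 6⌉ : ℝ) with htr
      have ht1 : (2 * (m:ℝ) + 1) / 6 ≤ tr := by
        rw [htr]; exact_mod_cast Int.le_ceil ((2 * (m:ℝ) + 1) / 6)
      have ht6 : (m : ℝ) + 1 ≤ 3 * tr := by
        have hti : ((2 * m + 1 : ℤ) : ℝ) ≤ ((6 * ⌈(2 * (m:ℝ) + 1) / 6⌉ : ℤ) : ℝ) := by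
          push_cast; rw [htr] at ht1; push_cast at ht1 ⊢; linarith
        have hti' : 2 * m + 1 ≤ 6 * ⌈(2 * (m:ℝ) + 1) / 6⌉ := by exact_mod_cast hti
        have hti'' : m + 1 ≤ 3 * ⌈(2 * (m:ℝ) + 1) / 6⌉ := by omega
        rw [htr]; exact_mod_cast hti''
      have hmul : (ℓ : ℝ) * ((m : ℝ) + 1) ≤ (ℓ : ℝ) * (3 * tr) :=
        mul_le_mul_of_nonneg_left ht6 hℓR.le
      rw [hcv]
      have hB : 3 * j ≤ ℓ * (m + 1) := by
        have hr : ((3 * j : ℤ) : ℝ) ≤ ((ℓ * (m + 1) : ℤ) : ℝ) := by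
          push_cast; nlinarith [h2]
        exact_mod_cast hr
      constructor
      · have hr : ((m * ℓ : ℤ) : ℝ) < ((3 * j : ℤ) : ℝ) := by
          push_cast; nlinarith [h1, hmul, hℓR]
        have := (by exact_mod_cast hr : m * ℓ < 3 * j)
        linarith
      · rcases lt_or_eq_of_le hB with h | h
        · linarith
        · exfalso
          have hdvd : ℓ ∣ 3 * j := ⟨m + 1, by linarith⟩
          rcases (Prime.dvd_mul hℓp).mp hdvd with h3 | hj
          · have := Int.le_of_dvd (by norm_num) h3
            omega
          · exact hℓj hj
  obtain ⟨hkey1, hkey2⟩ := key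
  set q : ℤ := ⌈((j : ℝ) * (k : ℝ) + (c : ℝ)) / (n : ℝ)⌉ with hq
  have hq1 : ((j : ℝ) * k + c) / n ≤ q := Int.le_ceil _
  have hq2 : (q : ℝ) < ((j : ℝ) * k + c) / n + 1 := Int.ceil_lt_add_one _
  have hu : j * k + c ≤ n * q := by
    have h : ((j * k + c : ℤ) : ℝ) ≤ ((n * q : ℤ) : ℝ) := by
      push_cast
      rw [div_le_iff₀ hnR] at hq1
      nlinarith [hq1]
    exact_mod_cast h
  have hl : n * (q - 1) ≤ j * k + c - 1 := by
    have h : ((n * (q - 1) : ℤ) : ℝ) < ((j * k + c : ℤ) : ℝ) := by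
      push_cast
      have h2' : ((q : ℝ) - 1) * n < (j : ℝ) * k + c := by
        rw [← lt_div_iff₀ hnR]; linarith
      nlinarith [h2']
    have h' : n * (q - 1) < j * k + c := by exact_mod_cast h
    omega
  rw [Int.ceil_eq_iff]
  have hint1 : n * ℓ * (q - 1) < j * (k * ℓ + 3) := by
    have h := mul_le_mul_of_nonneg_left hl hℓ0.le
    nlinarith [h]
  have hint2 : j * (k * ℓ + 3) ≤ n * ℓ * q := by
    have h := mul_le_mul_of_nonneg_left hu hℓ0.le
    nlinarith [h]
  constructor
  · have h : ((n * ℓ * (q - 1) : ℤ) : ℝ) < ((j * (k * ℓ + 3) : ℤ) : ℝ) := by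
      exact_mod_cast hint1
    push_cast at h
    rw [lt_div_iff₀ (by positivity : (0:ℝ) < (n:ℝ)*(ℓ:ℝ))]
    calc ((q:ℝ) - 1) * ((n:ℝ) * ℓ) = (n:ℝ) * ℓ * ((q:ℝ) - 1) := by ring
      _ < (j:ℝ) * ((k:ℝ) * ℓ + 3) := h
  · have h : ((j * (k * ℓ + 3) : ℤ) : ℝ) ≤ ((n * ℓ * q : ℤ) : ℝ) := by
      exact_mod_cast hint2
    push_cast at h
    rw [div_le_iff₀ (by positivity : (0:ℝ) < (n:ℝ)*(ℓ:ℝ))]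
    calc (j:ℝ) * ((k:ℝ) * ℓ + 3) ≤ (n:ℝ) * ℓ * q := h
      _ = (q:ℝ) * ((n:ℝ) * ℓ) := by ring
end

section
/- Let ℓ > 3 be a prime, let n ≥ 1 be an integer with gcd(n, ℓ) = 1, and let k be an integer with 0 ≤ k ≤ n−1 and kℓ ≡ −3 (mod n). Let i be an integer with 0 ≤ i ≤ 6n−1 and let j be an integer with 1 ≤ j ≤ nℓ−1, j ∈ I(i), and ℓ ∤ j. Then ⌊j(kℓ+4)/(nℓ)⌋ = ⌊(jk + ⌊(i+1)/2⌋ + ⌊i/6⌋)/n⌋. -/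
private lemma floorR (a d : ℤ) (hd : 0 ≤ d) : ⌊(a : ℝ) / (d : ℝ)⌋ = a / d := by
  lift d to ℕ using hd
  rw [show ((a : ℝ) / (((d : ℕ) : ℤ) : ℝ)) = ((((a : ℚ) / ((d : ℕ) : ℚ)) : ℚ) : ℝ) by
    push_cast; ring, Rat.floor_cast, Rat.floor_intCast_div_natCast]

private lemma ceilR (a d : ℤ) (hd : 0 ≤ d) : ⌈(a : ℝ) / (d : ℝ)⌉ = -((-a) / d) := by
  have h := floorR (-a) d hd
  rw [show (((-a : ℤ)) : ℝ) / (d : ℝ) = -((a : ℝ) / (d : ℝ)) by push_cast; ring,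
    Int.floor_neg] at h
  omega

theorem statement7 (ℓ n k i j : ℤ) (hℓp : Prime ℓ) (hℓ3 : 3 < ℓ) (hn : 1 ≤ n)
    (hcop : IsCoprime n ℓ) (hk0 : 0 ≤ k) (hk1 : k ≤ n - 1)
    (hkℓ : k * ℓ ≡ -3 [ZMOD n])
    (hi0 : 0 ≤ i) (hi1 : i ≤ 6 * n - 1) (hj1 : 1 ≤ j) (hj2 : j ≤ n * ℓ - 1)
    (hjI : j ∈ intervalI ℓ i) (hℓj : ¬ ℓ ∣ j) :
    ⌊(j : ℝ) * ((k : ℝ) * (ℓ : ℝ) + 4) / ((n : ℝ) * (ℓ : ℝ))⌋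
      = ⌊((j : ℝ) * (k : ℝ) + (⌊((i : ℝ) + 1) / 2⌋ : ℝ) + (⌊(i : ℝ) / 6⌋ : ℝ)) / (n : ℝ)⌋ := by
  have hℓ0 : (0 : ℤ) < ℓ := by omega
  -- the key inequalities: ℓ * a < 4j < ℓ * (a+1) where a = (i+1)/2 + i/6
  have key : ℓ * ((i + 1) / 2 + i / 6) < 4 * j ∧ 4 * j < ℓ * ((i + 1) / 2 + i / 6 + 1) := by
    unfold intervalI at hjI
    by_cases hpar : i % 2 = 0
    · obtain ⟨s, rfl⟩ : ∃ s, i = 2 * s := ⟨i / 2, by omega⟩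
      have hs : 0 ≤ s := by omega
      rw [if_pos hpar, Finset.mem_Icc] at hjI
      have hc : ⌈(((2 * s : ℤ) : ℝ) + 1) / 6⌉ = -((-(2 * s + 1)) / 6) := by
        rw [show (((2 * s : ℤ) : ℝ) + 1) / 6 = (((2 * s + 1 : ℤ)) : ℝ) / ((6 : ℤ) : ℝ) by
          push_cast; ring]
        exact ceilR _ _ (by norm_num)
      rw [hc] at hjI
      set C : ℤ := -((-(2 * s + 1)) / 6) with hC
      have e1 : (ℓ : ℝ) * (((2 * s : ℤ) : ℝ) / 2) / 3 = ((ℓ * s : ℤ) : ℝ) / ((3 : ℤ) : ℝ) := by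
        push_cast; ring
      have e2 : (ℓ : ℝ) * (((2 * s : ℤ) : ℝ) / 2 + ((C : ℤ) : ℝ)) / 4
          = ((ℓ * (s + C) : ℤ) : ℝ) / ((4 : ℤ) : ℝ) := by push_cast; ring
      rw [e1, e2, floorR _ _ (by norm_num), floorR _ _ (by norm_num)] at hjI
      obtain ⟨h1, h2⟩ := hjI
      -- lower bound
      have d3 := Int.mul_ediv_add_emod (ℓ * s) 3
      have d3a := Int.emod_nonneg (ℓ * s) (by norm_num : (3 : ℤ) ≠ 0)
      have d3b := Int.emod_lt_of_pos (ℓ * s) (by norm_num : (0 : ℤ) < 3)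
      have h3 : ℓ * s < 3 * j := by linarith
      have hA : 3 * ((2 * s + 1) / 2 + (2 * s) / 6) ≤ 4 * s := by omega
      have h6 : ℓ * (3 * ((2 * s + 1) / 2 + (2 * s) / 6)) ≤ ℓ * (4 * s) :=
        mul_le_mul_of_nonneg_left hA (by omega)
      constructor
      · nlinarith [h3, h6]
      -- upper bound
      · have d4 := Int.mul_ediv_add_emod (ℓ * (s + C)) 4
        have d4a := Int.emod_nonneg (ℓ * (s + C)) (by norm_num : (4 : ℤ) ≠ 0)
        have h7 : 4 * j ≤ ℓ * (s + C) := by linarith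
        have hsC : s + C = ((2 * s + 1) / 2 + (2 * s) / 6) + 1 := by omega
        rw [hsC] at h7
        rcases lt_or_eq_of_le h7 with h | h
        · exact h
        · exfalso
          have hdvd : ℓ ∣ 4 * j := h ▸ dvd_mul_right ℓ _
          rcases (Prime.dvd_mul hℓp).mp hdvd with h4 | hj
          · have := Int.le_of_dvd (by norm_num) h4
            have : ℓ = 4 := by omega
            rw [this] at hℓp; norm_num at hℓp
          · exact hℓj hj
    · obtain ⟨s, rfl⟩ : ∃ s, i = 2 * s + 1 := ⟨i / 2, by omega⟩
      have hs : 0 ≤ s := by omega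
      rw [if_neg (by omega), Finset.mem_Icc] at hjI
      have hc : ⌈((2 * s + 1 : ℤ) : ℝ) / 6⌉ = -((-(2 * s + 1)) / 6) := by
        rw [show ((2 * s + 1 : ℤ) : ℝ) / 6 = (((2 * s + 1 : ℤ)) : ℝ) / ((6 : ℤ) : ℝ) by
          push_cast; ring]
        exact ceilR _ _ (by norm_num)
      rw [hc] at hjI
      set C : ℤ := -((-(2 * s + 1)) / 6) with hC
      have e1 : (ℓ : ℝ) * ((((2 * s + 1 : ℤ) : ℝ) - 1) / 2 + ((C : ℤ) : ℝ)) / 4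
          = ((ℓ * (s + C) : ℤ) : ℝ) / ((4 : ℤ) : ℝ) := by push_cast; ring
      have e2 : (ℓ : ℝ) * ((((2 * s + 1 : ℤ) : ℝ) + 1) / 2) / 3
          = ((ℓ * (s + 1) : ℤ) : ℝ) / ((3 : ℤ) : ℝ) := by push_cast; ring
      rw [e1, e2, floorR _ _ (by norm_num), floorR _ _ (by norm_num)] at hjI
      obtain ⟨h1, h2⟩ := hjI
      have d4 := Int.mul_ediv_add_emod (ℓ * (s + C)) 4
      have d4a := Int.emod_nonneg (ℓ * (s + C)) (by norm_num : (4 : ℤ) ≠ 0)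
      have d4b := Int.emod_lt_of_pos (ℓ * (s + C)) (by norm_num : (0 : ℤ) < 4)
      have hsC : s + C = (2 * s + 1 + 1) / 2 + (2 * s + 1) / 6 := by omega
      constructor
      · -- lower: 4j > ℓ*(s+C) = ℓ*a
        have h3 : ℓ * (s + C) < 4 * j := by linarith
        rw [hsC] at h3; exact h3
      · -- upper
        have d3 := Int.mul_ediv_add_emod (ℓ * (s + 1)) 3
        have d3a := Int.emod_nonneg (ℓ * (s + 1)) (by norm_num : (3 : ℤ) ≠ 0)
        have h4 : 3 * j ≤ ℓ * (s + 1) := by linarith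
        have hne : 3 * j ≠ ℓ * (s + 1) := by
          intro h
          have hdvd : ℓ ∣ 3 * j := h ▸ dvd_mul_right ℓ _
          rcases (Prime.dvd_mul hℓp).mp hdvd with h3' | hj
          · have := Int.le_of_dvd (by norm_num) h3'
            omega
          · exact hℓj hj
        have h5 : 3 * j ≤ ℓ * (s + 1) - 1 := by omega
        have hA : 4 * (s + 1) ≤ 3 * ((2 * s + 1 + 1) / 2 + (2 * s + 1) / 6 + 1) := by omega
        have h6 : ℓ * (4 * (s + 1)) ≤ ℓ * (3 * ((2 * s + 1 + 1) / 2 + (2 * s + 1) / 6 + 1)) :=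
          mul_le_mul_of_nonneg_left hA (by omega)
        nlinarith [h5, h6]
  -- rewrite the floors of (i+1)/2 and i/6
  have hf1 : ⌊((i : ℝ) + 1) / 2⌋ = (i + 1) / 2 := by
    rw [show ((i : ℝ) + 1) / 2 = ((i + 1 : ℤ) : ℝ) / ((2 : ℤ) : ℝ) by push_cast; ring]
    exact floorR _ _ (by norm_num)
  have hf2 : ⌊(i : ℝ) / 6⌋ = i / 6 := by
    rw [show (i : ℝ) / 6 = ((i : ℤ) : ℝ) / ((6 : ℤ) : ℝ) by push_cast; ring]
    exact floorR _ _ (by norm_num)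
  rw [hf1, hf2]
  -- division with remainder of m = j*k + a by n
  obtain ⟨q, r, hr0, hrn, hqr⟩ :
      ∃ q r : ℤ, 0 ≤ r ∧ r < n ∧ j * k + ((i + 1) / 2 + i / 6) = n * q + r :=
    ⟨(j * k + ((i + 1) / 2 + i / 6)) / n, (j * k + ((i + 1) / 2 + i / 6)) % n,
      Int.emod_nonneg _ (by omega), Int.emod_lt_of_pos _ (by omega),
      (Int.mul_ediv_add_emod _ n).symm⟩
  have e : ℓ * (j * k + ((i + 1) / 2 + i / 6)) = ℓ * (n * q + r) := by rw [hqr]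
  have hℓr : 0 ≤ ℓ * r := mul_nonneg hℓ0.le hr0
  have hℓr' : ℓ * r ≤ ℓ * (n - 1) := mul_le_mul_of_nonneg_left (by omega) hℓ0.le
  have keyL : q * (n * ℓ) ≤ j * (k * ℓ + 4) := by nlinarith [key.1, e, hℓr]
  have keyU : j * (k * ℓ + 4) < (q + 1) * (n * ℓ) := by nlinarith [key.2, e, hℓr']
  have hn0 : (0 : ℝ) < (n : ℝ) := by exact_mod_cast (by omega : (0 : ℤ) < n)
  have hnℓ : (0 : ℝ) < (n : ℝ) * (ℓ : ℝ) := by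
    have : (0 : ℝ) < (ℓ : ℝ) := by exact_mod_cast hℓ0
    positivity
  have hL : ⌊(j : ℝ) * ((k : ℝ) * (ℓ : ℝ) + 4) / ((n : ℝ) * (ℓ : ℝ))⌋ = q := by
    rw [Int.floor_eq_iff]
    constructor
    · rw [le_div_iff₀ hnℓ]
      have : ((q * (n * ℓ) : ℤ) : ℝ) ≤ ((j * (k * ℓ + 4) : ℤ) : ℝ) := by exact_mod_cast keyL
      push_cast at this ⊢
      nlinarith [this]
    · rw [div_lt_iff₀ hnℓ]
      have : ((j * (k * ℓ + 4) : ℤ) : ℝ) < (((q + 1) * (n * ℓ) : ℤ) : ℝ) := by exact_mod_cast keyU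
      push_cast at this ⊢
      nlinarith [this]
  have hR : ⌊((j : ℝ) * (k : ℝ) + (((i + 1) / 2 : ℤ) : ℝ) + ((i / 6 : ℤ) : ℝ)) / (n : ℝ)⌋ = q := by
    rw [Int.floor_eq_iff]
    have hqrR := congrArg (fun z : ℤ => (z : ℝ)) hqr
    push_cast at hqrR
    have hr0R : (0 : ℝ) ≤ (r : ℝ) := by exact_mod_cast hr0
    have hrnR : (r : ℝ) < (n : ℝ) := by exact_mod_cast hrn
    constructor
    · rw [le_div_iff₀ hn0]; nlinarith [hqrR]
    · rw [div_lt_iff₀ hn0]; nlinarith [hqrR]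
  rw [hL, hR]
end

section
/- Let ℓ > 3 be a prime, let n ≥ 1 be an integer with gcd(n, ℓ) = 1, and let k be an integer with 0 ≤ k ≤ n−1 and kℓ ≡ −3 (mod n). Let i be an integer with 0 ≤ i ≤ 6n−1 and let j be an integer with 1 ≤ j ≤ nℓ−1, j ∈ I(i), and ℓ ∤ j. Then ⌈j(kℓ+3)/(nℓ)⌉ − ⌊j(kℓ+4)/(nℓ)⌋ = ⌈(jk + ⌊(i+2)/2⌋)/n⌉ − ⌊(jk + ⌊(i+1)/2⌋ + ⌊i/6⌋)/n⌋. -/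
private lemma floor_nested (y : ℝ) (n : ℤ) (hn : 0 < n) :
    ⌊y / (n : ℝ)⌋ = ⌊((⌊y⌋ : ℤ) : ℝ) / (n : ℝ)⌋ := by
  have hn' : (0:ℝ) < (n:ℝ) := by exact_mod_cast hn
  symm
  rw [Int.floor_eq_iff]
  constructor
  · have h1 : (⌊y / (n:ℝ)⌋ : ℝ) * n ≤ y := by
      rw [← le_div_iff₀ hn']; exact Int.floor_le _
    have h2 : ((⌊y / (n:ℝ)⌋ * n : ℤ) : ℝ) ≤ y := by push_cast; linarith
    have h3 : ⌊y / (n:ℝ)⌋ * n ≤ ⌊y⌋ := Int.le_floor.mpr h2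
    rw [le_div_iff₀ hn']
    exact_mod_cast h3
  · have h1 : y / (n:ℝ) < ⌊y / (n:ℝ)⌋ + 1 := Int.lt_floor_add_one _
    have h2 : y < ((⌊y / (n:ℝ)⌋ : ℝ) + 1) * n := by
      rwa [div_lt_iff₀ hn'] at h1
    have h3 : ((⌊y⌋ : ℤ) : ℝ) ≤ y := Int.floor_le _
    rw [div_lt_iff₀ hn']
    linarith

private lemma ceil_nested (y : ℝ) (n : ℤ) (hn : 0 < n) :
    ⌈y / (n : ℝ)⌉ = ⌈((⌈y⌉ : ℤ) : ℝ) / (n : ℝ)⌉ := by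
  have hn' : (0:ℝ) < (n:ℝ) := by exact_mod_cast hn
  have key := floor_nested (-y) n hn
  rw [show (-y) / (n:ℝ) = -(y / (n:ℝ)) from by ring, Int.floor_neg, Int.floor_neg] at key
  have h2 : ((-⌈y⌉ : ℤ) : ℝ) / (n:ℝ) = -(((⌈y⌉ : ℤ) : ℝ) / (n:ℝ)) := by push_cast; ring
  rw [h2, Int.floor_neg] at key
  exact neg_injective key

private lemma ceil_val (X t : ℤ) (ℓ : ℤ) (hℓ : 0 < ℓ)
    (h1 : ℓ * (t - 1) < X) (h2 : X ≤ ℓ * t) :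
    ⌈((X : ℤ) : ℝ) / (ℓ : ℝ)⌉ = t := by
  have hℓ' : (0:ℝ) < (ℓ:ℝ) := by exact_mod_cast hℓ
  rw [Int.ceil_eq_iff]
  constructor
  · rw [lt_div_iff₀ hℓ']
    have : ((ℓ * (t-1) : ℤ) : ℝ) < ((X:ℤ):ℝ) := by exact_mod_cast h1
    push_cast at this ⊢
    linarith
  · rw [div_le_iff₀ hℓ']
    have : ((X:ℤ):ℝ) ≤ ((ℓ * t : ℤ):ℝ) := by exact_mod_cast h2
    push_cast at this ⊢
    linarith

private lemma floor_val (X t : ℤ) (ℓ : ℤ) (hℓ : 0 < ℓ)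
    (h1 : ℓ * t ≤ X) (h2 : X < ℓ * (t + 1)) :
    ⌊((X : ℤ) : ℝ) / (ℓ : ℝ)⌋ = t := by
  have hℓ' : (0:ℝ) < (ℓ:ℝ) := by exact_mod_cast hℓ
  rw [Int.floor_eq_iff]
  constructor
  · rw [le_div_iff₀ hℓ']
    have : ((ℓ * t : ℤ) : ℝ) ≤ ((X:ℤ):ℝ) := by exact_mod_cast h1
    push_cast at this ⊢
    linarith
  · rw [div_lt_iff₀ hℓ']
    have : ((X:ℤ):ℝ) < ((ℓ * (t+1) : ℤ):ℝ) := by exact_mod_cast h2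
    push_cast at this ⊢
    linarith

private lemma main_lemma (ℓ n k j a b c : ℤ) (hn : 0 < n) (hℓ : 0 < ℓ)
    (H1 : ℓ * (a - 1) < 3 * j) (H2 : 3 * j ≤ ℓ * a)
    (H3 : ℓ * (b + c) ≤ 4 * j) (H4 : 4 * j < ℓ * (b + c + 1)) :
    ⌈(j : ℝ) * ((k : ℝ) * (ℓ : ℝ) + 3) / ((n : ℝ) * (ℓ : ℝ))⌉
        - ⌊(j : ℝ) * ((k : ℝ) * (ℓ : ℝ) + 4) / ((n : ℝ) * (ℓ : ℝ))⌋
      = ⌈((j : ℝ) * (k : ℝ) + (a : ℝ)) / (n : ℝ)⌉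
        - ⌊((j : ℝ) * (k : ℝ) + (b : ℝ) + (c : ℝ)) / (n : ℝ)⌋ := by
  have hℓ' : (0:ℝ) < (ℓ:ℝ) := by exact_mod_cast hℓ
  have hn' : (0:ℝ) < (n:ℝ) := by exact_mod_cast hn
  -- first term
  have e1 : (j : ℝ) * ((k : ℝ) * (ℓ : ℝ) + 3) / ((n : ℝ) * (ℓ : ℝ))
      = (((j * (k * ℓ + 3) : ℤ) : ℝ) / (ℓ : ℝ)) / (n : ℝ) := by
    rw [div_div]
    rw [show ((ℓ:ℝ) * (n:ℝ)) = (n:ℝ) * (ℓ:ℝ) from by ring]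
    congr 1
    push_cast; ring
  have e2 : (j : ℝ) * ((k : ℝ) * (ℓ : ℝ) + 4) / ((n : ℝ) * (ℓ : ℝ))
      = (((j * (k * ℓ + 4) : ℤ) : ℝ) / (ℓ : ℝ)) / (n : ℝ) := by
    rw [div_div]
    rw [show ((ℓ:ℝ) * (n:ℝ)) = (n:ℝ) * (ℓ:ℝ) from by ring]
    congr 1
    push_cast; ring
  have c1 : ⌈((j * (k * ℓ + 3) : ℤ) : ℝ) / (ℓ : ℝ)⌉ = j * k + a := by
    apply ceil_val _ _ _ hℓ <;> nlinarith
  have c2 : ⌊((j * (k * ℓ + 4) : ℤ) : ℝ) / (ℓ : ℝ)⌋ = j * k + b + c := by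
    apply floor_val _ _ _ hℓ <;> nlinarith
  rw [e1, e2, ceil_nested _ n hn, floor_nested _ n hn, c1, c2]
  congr 2
  · push_cast; ring
  · push_cast; ring

theorem statement8 (ℓ n k i j : ℤ) (hℓp : Prime ℓ) (hℓ3 : 3 < ℓ) (hn : 1 ≤ n)
    (hcop : IsCoprime n ℓ) (hk0 : 0 ≤ k) (hk1 : k ≤ n - 1)
    (hkℓ : k * ℓ ≡ -3 [ZMOD n])
    (hi0 : 0 ≤ i) (hi1 : i ≤ 6 * n - 1) (hj1 : 1 ≤ j) (hj2 : j ≤ n * ℓ - 1)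
    (hjI : j ∈ intervalI ℓ i) (hℓj : ¬ ℓ ∣ j) :
    ⌈(j : ℝ) * ((k : ℝ) * (ℓ : ℝ) + 3) / ((n : ℝ) * (ℓ : ℝ))⌉
        - ⌊(j : ℝ) * ((k : ℝ) * (ℓ : ℝ) + 4) / ((n : ℝ) * (ℓ : ℝ))⌋
      = ⌈((j : ℝ) * (k : ℝ) + (⌊((i : ℝ) + 2) / 2⌋ : ℝ)) / (n : ℝ)⌉
        - ⌊((j : ℝ) * (k : ℝ) + (⌊((i : ℝ) + 1) / 2⌋ : ℝ) + (⌊(i : ℝ) / 6⌋ : ℝ)) / (n : ℝ)⌋ := by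
  have hℓ : (0:ℤ) < ℓ := by linarith
  have hℓ' : (0:ℝ) < (ℓ:ℝ) := by exact_mod_cast hℓ
  have hn0 : (0:ℤ) < n := by linarith
  set c : ℤ := ⌊(i : ℝ) / 6⌋ with hc
  -- facts about c
  have hc1 : 6 * c ≤ i := by
    have := Int.floor_le ((i:ℝ)/6)
    rw [← hc] at this
    have : (c:ℝ) * 6 ≤ i := by rw [← le_div_iff₀ (by norm_num)]; exact this
    exact_mod_cast (by push_cast; linarith : ((6 * c : ℤ):ℝ) ≤ (i:ℝ))
  have hc2 : i ≤ 6 * c + 5 := by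
    have := Int.lt_floor_add_one ((i:ℝ)/6)
    rw [← hc] at this
    have h2 : (i:ℝ) < ((c:ℝ) + 1) * 6 := by rwa [div_lt_iff₀ (by norm_num)] at this
    have : (i:ℝ) < ((6*c + 6 : ℤ):ℝ) := by push_cast; linarith
    have := (by exact_mod_cast this : i < 6*c + 6)
    omega
  -- excluding the boundary multiple-of-ℓ case
  have key : ∀ t : ℤ, 4 * j ≤ ℓ * t → 4 * j < ℓ * t := by
    intro t ht
    rcases lt_or_eq_of_le ht with h | h
    · exact h
    · exfalso
      have hdvd : ℓ ∣ 4 * j := ⟨t, h⟩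
      rcases (hℓp.dvd_mul).mp hdvd with h4 | hj
      · have h2 : ℓ ∣ 2 := by
          have h22 : (4:ℤ) = 2 * 2 := by norm_num
          rw [h22] at h4
          rcases (hℓp.dvd_mul).mp h4 with h' | h' <;> exact h'
        have := Int.le_of_dvd (by norm_num) h2
        omega
      · exact hℓj hj
  rcases Int.emod_two_eq i with hpar | hpar
  · -- even case
    obtain ⟨m, rfl⟩ : ∃ m, i = 2 * m := ⟨i / 2, by omega⟩
    -- compute the floors on the RHS
    have ha : ⌊(((2*m : ℤ) : ℝ) + 2) / 2⌋ = m + 1 := by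
      have : (((2*m : ℤ) : ℝ) + 2) / 2 = ((m + 1 : ℤ) : ℝ) := by push_cast; ring
      rw [this, Int.floor_intCast]
    have hb : ⌊(((2*m : ℤ) : ℝ) + 1) / 2⌋ = m := by
      rw [Int.floor_eq_iff]
      constructor
      · push_cast; linarith
      · push_cast; linarith
    -- the ceiling inside the interval bound
    have hce : ⌈(((2*m : ℤ) : ℝ) + 1) / 6⌉ = c + 1 := by
      rw [Int.ceil_eq_iff]
      constructor
      · have : (6 * c : ℤ) ≤ 2 * m := hc1
        push_cast
        have : ((6*c : ℤ):ℝ) ≤ ((2*m : ℤ):ℝ) := by exact_mod_cast this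
        push_cast at this
        rw [lt_div_iff₀ (by norm_num)]
        linarith
      · have : (2*m : ℤ) ≤ 6 * c + 5 := hc2
        have : ((2*m : ℤ):ℝ) ≤ ((6*c+5 : ℤ):ℝ) := by exact_mod_cast this
        push_cast at this
        rw [div_le_iff₀ (by norm_num)]
        push_cast
        linarith
    -- extract the interval bounds
    rw [intervalI, if_pos (by omega : (2*m) % 2 = 0), Finset.mem_Icc] at hjI
    obtain ⟨hlo, hhi⟩ := hjI
    have hlo' : (ℓ:ℝ) * (((2*m:ℤ):ℝ) / 2) / 3 < (j:ℝ) := by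
      apply Int.floor_lt.mp
      omega
    have E1 : ℓ * m < 3 * j := by
      have : (ℓ:ℝ) * (m:ℝ) < 3 * (j:ℝ) := by
        rw [div_lt_iff₀ (by norm_num : (0:ℝ) < 3)] at hlo'
        push_cast at hlo' ⊢
        linarith
      exact_mod_cast (by push_cast; linarith : ((ℓ*m : ℤ):ℝ) < ((3*j : ℤ):ℝ))
    rw [hce] at hhi
    have hhi' : (j:ℝ) ≤ (ℓ:ℝ) * (((2*m:ℤ):ℝ) / 2 + ((c+1 : ℤ):ℝ)) / 4 := by
      have := Int.le_floor.mp hhi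
      exact_mod_cast this
    have E2 : 4 * j ≤ ℓ * (m + c + 1) := by
      have : 4 * (j:ℝ) ≤ (ℓ:ℝ) * ((m:ℝ) + (c:ℝ) + 1) := by
        rw [le_div_iff₀ (by norm_num : (0:ℝ) < 4)] at hhi'
        push_cast at hhi'
        linarith
      exact_mod_cast (by push_cast; linarith : ((4*j : ℤ):ℝ) ≤ ((ℓ*(m+c+1) : ℤ):ℝ))
    rw [ha, hb]
    apply main_lemma ℓ n k j (m+1) m c hn0 hℓ
    · linarith
    · -- 3j ≤ ℓ(m+1)
      have hint : 0 ≤ ℓ * (m + 1 - 3 * c) := by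
        apply mul_nonneg (le_of_lt hℓ)
        omega
      nlinarith
    · -- ℓ(m+c) ≤ 4j
      have hint : 0 ≤ ℓ * (m - 3 * c) := by
        apply mul_nonneg (le_of_lt hℓ)
        omega
      nlinarith
    · exact key (m + c + 1) E2
  · -- odd case
    obtain ⟨m, rfl⟩ : ∃ m, i = 2 * m + 1 := ⟨i / 2, by omega⟩
    have ha : ⌊(((2*m+1 : ℤ) : ℝ) + 2) / 2⌋ = m + 1 := by
      rw [Int.floor_eq_iff]
      constructor
      · push_cast; linarith
      · push_cast; linarith
    have hb : ⌊(((2*m+1 : ℤ) : ℝ) + 1) / 2⌋ = m + 1 := by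
      have : (((2*m+1 : ℤ) : ℝ) + 1) / 2 = ((m + 1 : ℤ) : ℝ) := by push_cast; ring
      rw [this, Int.floor_intCast]
    have hco : 6 * c < 2 * m + 1 := by omega
    have hce : ⌈((2*m+1 : ℤ) : ℝ) / 6⌉ = c + 1 := by
      rw [Int.ceil_eq_iff]
      constructor
      · have : ((6*c : ℤ):ℝ) < ((2*m+1 : ℤ):ℝ) := by exact_mod_cast hco
        push_cast at this ⊢
        rw [lt_div_iff₀ (by norm_num)]
        linarith
      · have : ((2*m+1 : ℤ):ℝ) ≤ ((6*c+5 : ℤ):ℝ) := by exact_mod_cast hc2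
        push_cast at this ⊢
        rw [div_le_iff₀ (by norm_num)]
        linarith
    rw [intervalI, if_neg (by omega : ¬ (2*m+1) % 2 = 0), Finset.mem_Icc] at hjI
    obtain ⟨hlo, hhi⟩ := hjI
    rw [hce] at hlo
    have hlo' : (ℓ:ℝ) * ((((2*m+1:ℤ):ℝ) - 1) / 2 + ((c+1 : ℤ):ℝ)) / 4 < (j:ℝ) := by
      apply Int.floor_lt.mp
      omega
    have O1 : ℓ * (m + c + 1) < 4 * j := by
      have : (ℓ:ℝ) * ((m:ℝ) + (c:ℝ) + 1) < 4 * (j:ℝ) := by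
        rw [div_lt_iff₀ (by norm_num : (0:ℝ) < 4)] at hlo'
        push_cast at hlo'
        linarith
      exact_mod_cast (by push_cast; linarith : ((ℓ*(m+c+1) : ℤ):ℝ) < ((4*j : ℤ):ℝ))
    have hhi' : (j:ℝ) ≤ (ℓ:ℝ) * ((((2*m+1:ℤ):ℝ) + 1) / 2) / 3 := by
      have := Int.le_floor.mp hhi
      exact_mod_cast this
    have O2 : 3 * j ≤ ℓ * (m + 1) := by
      have : 3 * (j:ℝ) ≤ (ℓ:ℝ) * ((m:ℝ) + 1) := by
        rw [le_div_iff₀ (by norm_num : (0:ℝ) < 3)] at hhi'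
        push_cast at hhi'
        linarith
      exact_mod_cast (by push_cast; linarith : ((3*j : ℤ):ℝ) ≤ ((ℓ*(m+1) : ℤ):ℝ))
    rw [ha, hb]
    apply main_lemma ℓ n k j (m+1) (m+1) c hn0 hℓ
    · -- ℓ m < 3 j
      have hint : 0 ≤ ℓ * (3 * c + 3 - m) := by
        apply mul_nonneg (le_of_lt hℓ)
        omega
      nlinarith
    · exact O2
    · linarith
    · -- 4j < ℓ(m+c+2)
      apply key
      have hint : 0 ≤ ℓ * (3 * c + 2 - m) := by
        apply mul_nonneg (le_of_lt hℓ)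
        omega
      nlinarith
end

section
/- Let ℓ > 3 be a prime, let n ≥ 1 be an integer with gcd(n, ℓ) = 1, and let k be an integer with 0 ≤ k ≤ n−1 and kℓ ≡ −3 (mod n). Define f(j) := ⌈j(kℓ+3)/(nℓ)⌉ − ⌊j(kℓ+4)/(nℓ)⌋. Let j be an integer with 1 ≤ j ≤ nℓ−1, ℓ ∤ j, and j ≡ aℓ (mod n) for an integer a with 0 ≤ a ≤ n−1 satisfying 0 ≤ 3a ≤ n−1. Then f(j) = 1 if and only if j lies in (0, 3aℓ/4) ∪ (aℓ, ℓ(n+3a)/4) ∪ (ℓ(n+3a)/3, ℓ(2n+3a)/4) ∪ (ℓ(2n+3a)/3, ℓ(3n+3a)/4), where these are open real intervals. -/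
set_option maxHeartbeats 1600000 in
theorem statement9 (ℓ n k a j : ℤ) (hℓp : Prime ℓ) (hℓ3 : 3 < ℓ) (hn : 1 ≤ n)
    (hcop : IsCoprime n ℓ) (hk0 : 0 ≤ k) (hk1 : k ≤ n - 1)
    (hkℓ : k * ℓ ≡ -3 [ZMOD n])
    (hj1 : 1 ≤ j) (hj2 : j ≤ n * ℓ - 1) (hℓj : ¬ ℓ ∣ j)
    (ha0 : 0 ≤ a) (ha1 : a ≤ n - 1) (hja : j ≡ a * ℓ [ZMOD n])
    (h3a : 0 ≤ 3 * a) (h3a' : 3 * a ≤ n - 1) :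
    (⌈(j : ℝ) * ((k : ℝ) * (ℓ : ℝ) + 3) / ((n : ℝ) * (ℓ : ℝ))⌉
        - ⌊(j : ℝ) * ((k : ℝ) * (ℓ : ℝ) + 4) / ((n : ℝ) * (ℓ : ℝ))⌋ = 1)
      ↔ (j : ℝ) ∈
          Set.Ioo (0 : ℝ) (3 * (a : ℝ) * (ℓ : ℝ) / 4)
          ∪ Set.Ioo ((a : ℝ) * (ℓ : ℝ)) ((ℓ : ℝ) * ((n : ℝ) + 3 * (a : ℝ)) / 4)
          ∪ Set.Ioo ((ℓ : ℝ) * ((n : ℝ) + 3 * (a : ℝ)) / 3)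
              ((ℓ : ℝ) * (2 * (n : ℝ) + 3 * (a : ℝ)) / 4)
          ∪ Set.Ioo ((ℓ : ℝ) * (2 * (n : ℝ) + 3 * (a : ℝ)) / 3)
              ((ℓ : ℝ) * (3 * (n : ℝ) + 3 * (a : ℝ)) / 4) := by
  have hℓ0 : (0:ℤ) < ℓ := by linarith
  have hn0 : (0:ℤ) < n := by linarith
  have hnℓ0 : (0:ℤ) < n * ℓ := mul_pos hn0 hℓ0
  have haℓ0 : (0:ℤ) ≤ a * ℓ := mul_nonneg ha0 hℓ0.le
  have h3al : 3 * a * ℓ ≤ (n - 1) * ℓ := by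
    have := mul_le_mul_of_nonneg_right h3a' hℓ0.le
    linarith
  obtain ⟨c, hc⟩ : ∃ c, k * ℓ + 3 = n * c := by
    obtain ⟨t, ht⟩ := hkℓ.dvd
    exact ⟨-t, by linarith⟩
  obtain ⟨d, hd⟩ : ∃ d, j - a * ℓ = n * d := by
    obtain ⟨t, ht⟩ := hja.dvd
    exact ⟨-t, by linarith⟩
  have hkey : n * (j * c - 3 * d) = ℓ * (j * k + 3 * a) := by
    linear_combination (-j) * hc + 3 * hd
  obtain ⟨e, he⟩ : ∃ e, j * k + 3 * a = n * e := by
    have hdvd : (n:ℤ) ∣ ℓ * (j * k + 3 * a) := ⟨j * c - 3 * d, hkey.symm⟩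
    exact hcop.dvd_of_dvd_mul_left hdvd
  have hjc : j * c = 3 * d + ℓ * e := by
    have h2 : n * (j * c - 3 * d) = n * (ℓ * e) := by
      rw [hkey, he]; ring
    have h3 := mul_left_cancel₀ (ne_of_gt hn0) h2
    linarith
  set r := 3 * d % ℓ with hrdef
  set q := 3 * d / ℓ with hqdef
  have hqr : ℓ * q + r = 3 * d := Int.mul_ediv_add_emod (3*d) ℓ
  have hr0 : 0 ≤ r := Int.emod_nonneg _ (ne_of_gt hℓ0)
  have hrℓ : r < ℓ := Int.emod_lt_of_pos _ hℓ0
  have hℓc : ¬ ℓ ∣ c := by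
    intro h
    have h1 : ℓ ∣ n * c := Dvd.dvd.mul_left h n
    have h2 : ℓ ∣ k * ℓ := ⟨k, mul_comm k ℓ⟩
    have h3 : ℓ ∣ (3:ℤ) := by
      have : ℓ ∣ (k * ℓ + 3) - k * ℓ := dvd_sub (hc ▸ h1) h2
      simpa using this
    have := Int.le_of_dvd (by norm_num) h3
    linarith
  have hr1 : 1 ≤ r := by
    rcases hr0.lt_or_eq with h | h
    · linarith
    · exfalso
      have hdvd : ℓ ∣ j * c := ⟨q + e, by linear_combination hjc - hqr - h⟩
      rcases hℓp.dvd_mul.mp hdvd with h' | h'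
      exacts [hℓj h', hℓc h']
  have h3d : n * (3 * d) = 3 * j - 3 * a * ℓ := by linear_combination (-3) * hd
  -- integer identities for the two fractions
  have hint1 : j * (k * ℓ + 3) = n * (ℓ * (q + e) + r) := by
    linear_combination j * hc + n * hjc - n * hqr
  have hint2 : j * (k * ℓ + 4) = n * ℓ * (q + e) + (n * r + j) := by
    linear_combination hint1
  have hne : (n:ℝ) ≠ 0 := Int.cast_ne_zero.mpr (ne_of_gt hn0)
  have hle : (ℓ:ℝ) ≠ 0 := Int.cast_ne_zero.mpr (ne_of_gt hℓ0)
  have hx : (j : ℝ) * ((k : ℝ) * (ℓ : ℝ) + 3) / ((n : ℝ) * (ℓ : ℝ))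
      = ((q : ℝ) + (e : ℝ)) + (r : ℝ) / (ℓ : ℝ) := by
    have h := congrArg (fun z : ℤ => (z : ℝ)) hint1
    push_cast at h
    rw [show (j : ℝ) * ((k : ℝ) * (ℓ : ℝ) + 3)
        = (n:ℝ) * ((ℓ:ℝ) * ((q:ℝ) + (e:ℝ)) + (r:ℝ)) from by linarith]
    field_simp
  have hx' : (j : ℝ) * ((k : ℝ) * (ℓ : ℝ) + 4) / ((n : ℝ) * (ℓ : ℝ))
      = ((q : ℝ) + (e : ℝ)) + ((n : ℝ) * (r : ℝ) + (j : ℝ)) / ((n : ℝ) * (ℓ : ℝ)) := by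
    have h := congrArg (fun z : ℤ => (z : ℝ)) hint2
    push_cast at h
    rw [show (j : ℝ) * ((k : ℝ) * (ℓ : ℝ) + 4)
        = (n:ℝ) * (ℓ:ℝ) * ((q:ℝ) + (e:ℝ)) + ((n:ℝ) * (r:ℝ) + (j:ℝ)) from by linarith]
    field_simp
  have hrl : (0:ℝ) < (r:ℝ) / (ℓ:ℝ) := by
    apply div_pos
    · exact_mod_cast hr1.trans_lt' (by norm_num)
    · exact_mod_cast hℓ0
  have hrl1 : (r:ℝ) / (ℓ:ℝ) < 1 := by
    rw [div_lt_one (by exact_mod_cast hℓ0)]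
    exact_mod_cast hrℓ
  have hA : ⌈(j : ℝ) * ((k : ℝ) * (ℓ : ℝ) + 3) / ((n : ℝ) * (ℓ : ℝ))⌉ = q + e + 1 := by
    rw [hx, Int.ceil_eq_iff]
    constructor <;> push_cast <;> linarith
  have hnr0 : (0:ℤ) ≤ n * r := mul_nonneg hn0.le hr0
  have hnr1 : n * r ≤ n * (ℓ - 1) := mul_le_mul_of_nonneg_left (by linarith) hn0.le
  have hs0 : (0:ℤ) < n * r + j := by linarith
  have hs2 : n * r + j < 2 * (n * ℓ) := by nlinarith [hnr1]
  have hnl0R : (0:ℝ) < (n:ℝ) * (ℓ:ℝ) := by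
    have : ((n * ℓ : ℤ) : ℝ) = (n:ℝ) * (ℓ:ℝ) := by push_cast; ring
    rw [← this]; exact_mod_cast hnℓ0
  have key : (⌈(j : ℝ) * ((k : ℝ) * (ℓ : ℝ) + 3) / ((n : ℝ) * (ℓ : ℝ))⌉
        - ⌊(j : ℝ) * ((k : ℝ) * (ℓ : ℝ) + 4) / ((n : ℝ) * (ℓ : ℝ))⌋ = 1)
      ↔ n * r + j < n * ℓ := by
    by_cases hcase : n * r + j < n * ℓ
    · have hB : ⌊(j : ℝ) * ((k : ℝ) * (ℓ : ℝ) + 4) / ((n : ℝ) * (ℓ : ℝ))⌋ = q + e := by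
        rw [hx', Int.floor_eq_iff]
        have hfr0 : (0:ℝ) ≤ ((n:ℝ) * (r:ℝ) + (j:ℝ)) / ((n:ℝ) * (ℓ:ℝ)) := by
          apply div_nonneg _ hnl0R.le
          have : ((n * r + j : ℤ) : ℝ) = (n:ℝ) * (r:ℝ) + (j:ℝ) := by push_cast; ring
          rw [← this]; exact_mod_cast hs0.le
        have hfr1 : ((n:ℝ) * (r:ℝ) + (j:ℝ)) / ((n:ℝ) * (ℓ:ℝ)) < 1 := by
          rw [div_lt_one hnl0R]
          have h1 : ((n * r + j : ℤ) : ℝ) < ((n * ℓ : ℤ) : ℝ) := by exact_mod_cast hcase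
          push_cast at h1; linarith
        constructor <;> push_cast <;> linarith
      rw [hA, hB]
      constructor <;> intro _
      · exact hcase
      · ring
    · have hB : ⌊(j : ℝ) * ((k : ℝ) * (ℓ : ℝ) + 4) / ((n : ℝ) * (ℓ : ℝ))⌋ = q + e + 1 := by
        rw [hx', Int.floor_eq_iff]
        have h1 : ((n * ℓ : ℤ) : ℝ) ≤ ((n * r + j : ℤ) : ℝ) := by exact_mod_cast not_lt.mp hcase
        have h2 : ((n * r + j : ℤ) : ℝ) < ((2 * (n * ℓ) : ℤ) : ℝ) := by exact_mod_cast hs2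
        push_cast at h1 h2
        have hfr1 : (1:ℝ) ≤ ((n:ℝ) * (r:ℝ) + (j:ℝ)) / ((n:ℝ) * (ℓ:ℝ)) := by
          rw [le_div_iff₀ hnl0R]; linarith
        have hfr2 : ((n:ℝ) * (r:ℝ) + (j:ℝ)) / ((n:ℝ) * (ℓ:ℝ)) < 2 := by
          rw [div_lt_iff₀ hnl0R]; linarith
        constructor <;> push_cast <;> linarith
      rw [hA, hB]
      constructor <;> intro h
      · exfalso; omega
      · exact absurd h hcase
  have hj0R : (0:ℝ) < (j:ℝ) := by exact_mod_cast hj1.trans_lt' (by norm_num)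
  have hRHSiff : ((j : ℝ) ∈
          Set.Ioo (0 : ℝ) (3 * (a : ℝ) * (ℓ : ℝ) / 4)
          ∪ Set.Ioo ((a : ℝ) * (ℓ : ℝ)) ((ℓ : ℝ) * ((n : ℝ) + 3 * (a : ℝ)) / 4)
          ∪ Set.Ioo ((ℓ : ℝ) * ((n : ℝ) + 3 * (a : ℝ)) / 3)
              ((ℓ : ℝ) * (2 * (n : ℝ) + 3 * (a : ℝ)) / 4)
          ∪ Set.Ioo ((ℓ : ℝ) * (2 * (n : ℝ) + 3 * (a : ℝ)) / 3)
              ((ℓ : ℝ) * (3 * (n : ℝ) + 3 * (a : ℝ)) / 4))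
      ↔ (4 * j < 3 * a * ℓ
        ∨ (a * ℓ < j ∧ 4 * j < ℓ * (n + 3 * a))
        ∨ (ℓ * (n + 3 * a) < 3 * j ∧ 4 * j < ℓ * (2 * n + 3 * a))
        ∨ (ℓ * (2 * n + 3 * a) < 3 * j ∧ 4 * j < ℓ * (3 * n + 3 * a))) := by
    simp only [Set.mem_union, Set.mem_Ioo]
    constructor
    · rintro (((⟨h1, h2⟩ | ⟨h1, h2⟩) | ⟨h1, h2⟩) | ⟨h1, h2⟩)
      · left; rify; linarith
      · right; left; constructor
        · rify; linarith
        · rify; linarith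
      · right; right; left; constructor
        · rify; linarith
        · rify; linarith
      · right; right; right; constructor
        · rify; linarith
        · rify; linarith
    · rintro (h | ⟨h1, h2⟩ | ⟨h1, h2⟩ | ⟨h1, h2⟩)
      · left; left; left; refine ⟨hj0R, ?_⟩; rify at h; linarith
      · left; left; right
        constructor
        · rify at h1; linarith
        · rify at h2; linarith
      · left; right
        constructor
        · rify at h1; linarith
        · rify at h2; linarith
      · right
        constructor
        · rify at h1; linarith
        · rify at h2; linarith
  rw [key, hRHSiff]
  rcases lt_trichotomy j (a * ℓ) with hw | hw | hw
  · -- j < aℓ : 3d ∈ (-ℓ, 0), r = 3d + ℓ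
    have hdneg : 3 * d < 0 := by
      have h' : n * (3 * d) < n * 0 := by rw [h3d]; linarith
      exact lt_of_mul_lt_mul_left h' hn0.le
    have hdlb : -ℓ < 3 * d := by
      have h' : n * (-ℓ) < n * (3 * d) := by rw [h3d]; linarith
      exact lt_of_mul_lt_mul_left h' hn0.le
    have hrval : r = 3 * d + ℓ := by
      have h1 : (3 * d + ℓ) % ℓ = 3 * d % ℓ := by
        rw [show 3 * d + ℓ = 3 * d + ℓ * 1 by ring]
        exact Int.add_mul_emod_self_left _ _ _
      rw [hrdef, ← h1, Int.emod_eq_of_lt (by linarith) (by linarith)]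
    rw [hrval]
    constructor
    · intro h; left; linarith
    · rintro (h | ⟨h1, h2⟩ | ⟨h1, h2⟩ | ⟨h1, h2⟩)
      · linarith
      · linarith
      · linarith
      · linarith
  · exact absurd ⟨a, by rw [hw, mul_comm]⟩ hℓj
  · rcases lt_trichotomy (3 * j) (ℓ * (n + 3 * a)) with hv | hv | hv
    · -- aℓ < j, 3j < ℓ(n+3a) : 3d ∈ (0, ℓ), r = 3d
      have hd0 : 0 < 3 * d := by
        have h' : n * 0 < n * (3 * d) := by rw [h3d]; linarith
        exact lt_of_mul_lt_mul_left h' hn0.le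
      have hdub : 3 * d < ℓ := by
        have h' : n * (3 * d) < n * ℓ := by rw [h3d]; linarith
        exact lt_of_mul_lt_mul_left h' hn0.le
      have hrval : r = 3 * d := by
        rw [hrdef, Int.emod_eq_of_lt (by linarith) hdub]
      rw [hrval]
      constructor
      · intro h; right; left; exact ⟨hw, by linarith⟩
      · rintro (h | ⟨h1, h2⟩ | ⟨h1, h2⟩ | ⟨h1, h2⟩)
        · linarith
        · linarith
        · linarith
        · linarith
    · exfalso
      have hdvd : ℓ ∣ 3 * j := ⟨n + 3 * a, hv⟩
      rcases hℓp.dvd_mul.mp hdvd with h' | h'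
      · have := Int.le_of_dvd (by norm_num) h'
        linarith
      · exact hℓj h'
    · rcases lt_trichotomy (3 * j) (ℓ * (2 * n + 3 * a)) with hu | hu | hu
      · -- ℓ(n+3a) < 3j < ℓ(2n+3a) : 3d ∈ (ℓ, 2ℓ), r = 3d - ℓ
        have hdlb : ℓ < 3 * d := by
          have h' : n * ℓ < n * (3 * d) := by rw [h3d]; linarith
          exact lt_of_mul_lt_mul_left h' hn0.le
        have hdub : 3 * d < 2 * ℓ := by
          have h' : n * (3 * d) < n * (2 * ℓ) := by rw [h3d]; linarith
          exact lt_of_mul_lt_mul_left h' hn0.le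
        have hrval : r = 3 * d - ℓ := by
          have h1 : (3 * d - ℓ) % ℓ = 3 * d % ℓ := by
            rw [show 3 * d - ℓ = 3 * d + ℓ * (-1) by ring]
            exact Int.add_mul_emod_self_left _ _ _
          rw [hrdef, ← h1, Int.emod_eq_of_lt (by linarith) (by linarith)]
        rw [hrval]
        constructor
        · intro h; right; right; left; exact ⟨hv, by linarith⟩
        · rintro (h | ⟨h1, h2⟩ | ⟨h1, h2⟩ | ⟨h1, h2⟩)
          · linarith
          · linarith
          · linarith
          · linarith
      · exfalso
        have hdvd : ℓ ∣ 3 * j := ⟨2 * n + 3 * a, hu⟩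
        rcases hℓp.dvd_mul.mp hdvd with h' | h'
        · have := Int.le_of_dvd (by norm_num) h'
          linarith
        · exact hℓj h'
      · -- ℓ(2n+3a) < 3j : 3d ∈ (2ℓ, 3ℓ), r = 3d - 2ℓ
        have hdlb : 2 * ℓ < 3 * d := by
          have h' : n * (2 * ℓ) < n * (3 * d) := by rw [h3d]; linarith
          exact lt_of_mul_lt_mul_left h' hn0.le
        have hdub : 3 * d < 3 * ℓ := by
          have h' : n * (3 * d) < n * (3 * ℓ) := by rw [h3d]; linarith
          exact lt_of_mul_lt_mul_left h' hn0.le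
        have hrval : r = 3 * d - 2 * ℓ := by
          have h1 : (3 * d - 2 * ℓ) % ℓ = 3 * d % ℓ := by
            rw [show 3 * d - 2 * ℓ = 3 * d + ℓ * (-2) by ring]
            exact Int.add_mul_emod_self_left _ _ _
          rw [hrdef, ← h1, Int.emod_eq_of_lt (by linarith) (by linarith)]
        rw [hrval]
        constructor
        · intro h; right; right; right; exact ⟨hu, by linarith⟩
        · rintro (h | ⟨h1, h2⟩ | ⟨h1, h2⟩ | ⟨h1, h2⟩)
          · linarith
          · linarith
          · linarith
          · linarith
end

section
/- Let ℓ > 3 be a prime, let n ≥ 1 be an integer with gcd(n, ℓ) = 1, and let k be an integer with 0 ≤ k ≤ n−1 and kℓ ≡ −3 (mod n). Define f(j) := ⌈j(kℓ+3)/(nℓ)⌉ − ⌊j(kℓ+4)/(nℓ)⌋. Let j be an integer with 1 ≤ j ≤ nℓ−1, ℓ ∤ j, and j ≡ aℓ (mod n) for an integer a with 0 ≤ a ≤ n−1 satisfying n ≤ 3a ≤ 2n−1. Then f(j) = 1 if and only if j lies in (0, ℓ(3a−n)/4) ∪ (ℓ(3a−n)/3, 3ℓa/4) ∪ (aℓ,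 ℓ(n+3a)/4) ∪ (ℓ(n+3a)/3, ℓ(2n+3a)/4), where these are open real intervals. -/
lemma key10 (ℓ n a t j : ℤ) (hℓ3 : 3 < ℓ) (hn : 1 ≤ n) (hj1 : 1 ≤ j)
    (hj2 : j ≤ n*ℓ - 1) (ht : j = a*ℓ + t*n)
    (h3a : n ≤ 3*a) (h3a' : 3*a ≤ 2*n - 1) (hnd : ¬ ℓ ∣ 3*t) :
    n * (3*t % ℓ) + j < n * ℓ ↔
      (((0 < j ∧ j*4 < ℓ*(3*a - n)) ∨
      (ℓ*(3*a-n) < j*3 ∧ j*4 < 3*ℓ*a)) ∨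
      (a*ℓ < j ∧ j*4 < ℓ*(n + 3*a))) ∨
      (ℓ*(n+3*a) < j*3 ∧ j*4 < ℓ*(2*n + 3*a)) := by
  have hℓ0 : (0:ℤ) < ℓ := by omega
  have hn0 : (0:ℤ) < n := by omega
  have ha : 1 ≤ a := by omega
  have hnl : 0 < n*ℓ := mul_pos hn0 hℓ0
  have hal : ℓ ≤ a*ℓ := by nlinarith
  have h3al : n*ℓ ≤ 3*(a*ℓ) := by nlinarith
  have h3al' : 3*(a*ℓ) ≤ 2*(n*ℓ) - ℓ := by nlinarith
  have htu : 3*t < 3*ℓ := by nlinarith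
  have htl : -(3*ℓ) < 3*t := by nlinarith
  have hmod : ∀ d : ℤ, 0 ≤ 3*t + ℓ*d → 3*t + ℓ*d < ℓ → 3*t % ℓ = 3*t + ℓ*d := by
    intro d h0 h1
    calc 3*t % ℓ = (3*t + ℓ*d) % ℓ := (Int.add_mul_emod_self_left (3*t) ℓ d).symm
    _ = 3*t + ℓ*d := Int.emod_eq_of_lt h0 h1
  have hne1 : 3*t ≠ -(2*ℓ) := by intro h; exact hnd ⟨-2, by omega⟩
  have hne2 : 3*t ≠ -ℓ := by intro h; exact hnd ⟨-1, by omega⟩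
  have hne3 : 3*t ≠ 0 := by intro h; exact hnd ⟨0, by omega⟩
  have hne4 : 3*t ≠ ℓ := by intro h; exact hnd ⟨1, by omega⟩
  have hne5 : 3*t ≠ 2*ℓ := by intro h; exact hnd ⟨2, by omega⟩
  rcases lt_or_gt_of_ne hne3 with hc | hc
  · rcases lt_or_gt_of_ne hne2 with hc2 | hc2
    · rcases lt_or_gt_of_ne hne1 with hc3 | hc3
      · exfalso
        have hb := mul_lt_mul_of_pos_right hc3 hn0
        linarith
      · rw [hmod 2 (by linarith) (by linarith)]
        have hb1 := mul_lt_mul_of_pos_right hc3 hn0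
        have hb2 := mul_lt_mul_of_pos_right hc2 hn0
        constructor
        · intro h
          exact Or.inl (Or.inl (Or.inl ⟨by linarith, by linarith⟩))
        · rintro (((⟨h1,h2⟩|⟨h1,h2⟩)|⟨h1,h2⟩)|⟨h1,h2⟩) <;> linarith
    · rw [hmod 1 (by linarith) (by linarith)]
      have hb1 := mul_lt_mul_of_pos_right hc2 hn0
      have hb2 := mul_lt_mul_of_pos_right hc hn0
      constructor
      · intro h
        exact Or.inl (Or.inl (Or.inr ⟨by linarith, by linarith⟩))
      · rintro (((⟨h1,h2⟩|⟨h1,h2⟩)|⟨h1,h2⟩)|⟨h1,h2⟩) <;> linarith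
  · rcases lt_or_gt_of_ne hne4 with hc2 | hc2
    · rw [hmod 0 (by linarith) (by linarith)]
      have hb1 := mul_lt_mul_of_pos_right hc hn0
      have hb2 := mul_lt_mul_of_pos_right hc2 hn0
      constructor
      · intro h
        exact Or.inl (Or.inr ⟨by linarith, by linarith⟩)
      · rintro (((⟨h1,h2⟩|⟨h1,h2⟩)|⟨h1,h2⟩)|⟨h1,h2⟩) <;> linarith
    · rcases lt_or_gt_of_ne hne5 with hc3 | hc3
      · rw [hmod (-1) (by linarith) (by linarith)]
        have hb1 := mul_lt_mul_of_pos_right hc2 hn0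
        have hb2 := mul_lt_mul_of_pos_right hc3 hn0
        constructor
        · intro h
          exact Or.inr ⟨by linarith, by linarith⟩
        · rintro (((⟨h1,h2⟩|⟨h1,h2⟩)|⟨h1,h2⟩)|⟨h1,h2⟩) <;> linarith
      · rw [hmod (-2) (by linarith) (by linarith)]
        have hb1 := mul_lt_mul_of_pos_right hc3 hn0
        constructor
        · intro h; exfalso; linarith
        · rintro (((⟨h1,h2⟩|⟨h1,h2⟩)|⟨h1,h2⟩)|⟨h1,h2⟩) <;> linarith

theorem statement10 (ℓ n k a j : ℤ) (hℓp : Prime ℓ) (hℓ3 : 3 < ℓ) (hn : 1 ≤ n)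
    (hcop : IsCoprime n ℓ) (hk0 : 0 ≤ k) (hk1 : k ≤ n - 1)
    (hkℓ : k * ℓ ≡ -3 [ZMOD n])
    (hj1 : 1 ≤ j) (hj2 : j ≤ n * ℓ - 1) (hℓj : ¬ ℓ ∣ j)
    (ha0 : 0 ≤ a) (ha1 : a ≤ n - 1) (hja : j ≡ a * ℓ [ZMOD n])
    (h3a : n ≤ 3 * a) (h3a' : 3 * a ≤ 2 * n - 1) :
    (⌈(j : ℝ) * ((k : ℝ) * (ℓ : ℝ) + 3) / ((n : ℝ) * (ℓ : ℝ))⌉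
        - ⌊(j : ℝ) * ((k : ℝ) * (ℓ : ℝ) + 4) / ((n : ℝ) * (ℓ : ℝ))⌋ = 1)
      ↔ (j : ℝ) ∈
          Set.Ioo (0 : ℝ) ((ℓ : ℝ) * (3 * (a : ℝ) - (n : ℝ)) / 4)
          ∪ Set.Ioo ((ℓ : ℝ) * (3 * (a : ℝ) - (n : ℝ)) / 3) (3 * (ℓ : ℝ) * (a : ℝ) / 4)
          ∪ Set.Ioo ((a : ℝ) * (ℓ : ℝ)) ((ℓ : ℝ) * ((n : ℝ) + 3 * (a : ℝ)) / 4)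
          ∪ Set.Ioo ((ℓ : ℝ) * ((n : ℝ) + 3 * (a : ℝ)) / 3)
              ((ℓ : ℝ) * (2 * (n : ℝ) + 3 * (a : ℝ)) / 4) := by
  have hℓ0 : (0:ℤ) < ℓ := by omega
  have hn0 : (0:ℤ) < n := by omega
  obtain ⟨c, hc⟩ : ∃ c, k * ℓ + 3 = n * c := by
    obtain ⟨c, hc⟩ := Int.ModEq.dvd hkℓ
    exact ⟨-c, by linear_combination -hc⟩
  obtain ⟨t, ht⟩ : ∃ t, j = a * ℓ + t * n := by
    obtain ⟨t, ht⟩ := Int.ModEq.dvd hja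
    exact ⟨-t, by linear_combination -ht⟩
  have hnd : ¬ ℓ ∣ 3 * t := by
    intro hd
    rcases (Prime.dvd_mul hℓp).mp hd with h3 | htd
    · have := Int.le_of_dvd (by norm_num) h3; omega
    · exact hℓj (ht ▸ dvd_add (dvd_mul_left ℓ a) (htd.mul_right n))
  set r : ℤ := 3*t % ℓ with hrdef
  set q : ℤ := a*c + t*k + 3*t / ℓ with hqdef
  have he : ℓ * (3*t / ℓ) + 3*t % ℓ = 3*t := Int.mul_ediv_add_emod (3*t) ℓ
  have hr0 : 0 ≤ r := Int.emod_nonneg _ (by omega)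
  have hrl : r < ℓ := Int.emod_lt_of_pos _ hℓ0
  have hrne : r ≠ 0 := fun h => hnd (Int.dvd_of_emod_eq_zero h)
  have hqr : j * (k*ℓ + 3) = n * (ℓ*q + r) := by
    rw [hrdef, hqdef]
    linear_combination (k*ℓ+3)*ht + (a*ℓ)*hc - n*he
  have hqr2 : j * (k*ℓ + 4) = n*ℓ*q + (n*r + j) := by linear_combination hqr
  have hnR : (0:ℝ) < (n:ℝ) := by exact_mod_cast hn0
  have hℓR : (0:ℝ) < (ℓ:ℝ) := by exact_mod_cast hℓ0
  have hnlR : (0:ℝ) < (n:ℝ)*(ℓ:ℝ) := mul_pos hnR hℓR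
  have hqrR : (j:ℝ) * ((k:ℝ)*(ℓ:ℝ) + 3) = (n:ℝ) * ((ℓ:ℝ)*(q:ℝ) + (r:ℝ)) := by
    exact_mod_cast hqr
  have hqr2R : (j:ℝ) * ((k:ℝ)*(ℓ:ℝ) + 4) = (n:ℝ)*(ℓ:ℝ)*(q:ℝ) + ((n:ℝ)*(r:ℝ) + (j:ℝ)) := by
    exact_mod_cast hqr2
  have hr0R : (0:ℝ) < (r:ℝ) := by exact_mod_cast lt_of_le_of_ne hr0 (Ne.symm hrne)
  have hrlR : (r:ℝ) < (ℓ:ℝ) := by exact_mod_cast hrl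
  have hA : (j : ℝ) * ((k : ℝ) * (ℓ : ℝ) + 3) / ((n : ℝ) * (ℓ : ℝ))
      = ((ℓ:ℝ)*(q:ℝ) + (r:ℝ)) / (ℓ:ℝ) := by
    rw [div_eq_div_iff (by positivity) hℓR.ne']
    linear_combination (ℓ:ℝ) * hqrR
  have hceil : ⌈((ℓ:ℝ)*(q:ℝ) + (r:ℝ)) / (ℓ:ℝ)⌉ = q + 1 := by
    rw [Int.ceil_eq_iff]
    push_cast
    constructor
    · rw [lt_div_iff₀ hℓR]; nlinarith
    · rw [div_le_iff₀ hℓR]; nlinarith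
  have hB : (j : ℝ) * ((k : ℝ) * (ℓ : ℝ) + 4) / ((n : ℝ) * (ℓ : ℝ))
      = ((n:ℝ)*(ℓ:ℝ)*(q:ℝ) + ((n:ℝ)*(r:ℝ) + (j:ℝ))) / ((n:ℝ)*(ℓ:ℝ)) := by
    rw [div_eq_div_iff (by positivity) hnlR.ne']
    linear_combination ((n:ℝ)*(ℓ:ℝ)) * hqr2R
  have hjR : (0:ℝ) < (j:ℝ) := by exact_mod_cast (by omega : (0:ℤ) < j)
  have hiff : (q + 1 - ⌊((n:ℝ)*(ℓ:ℝ)*(q:ℝ) + ((n:ℝ)*(r:ℝ) + (j:ℝ))) / ((n:ℝ)*(ℓ:ℝ))⌋ = 1)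
      ↔ n*r + j < n*ℓ := by
    have hMR : ((n*r + j : ℤ):ℝ) = (n:ℝ)*(r:ℝ) + (j:ℝ) := by push_cast; ring
    by_cases hM : n*r + j < n*ℓ
    · have hMlt : (n:ℝ)*(r:ℝ) + (j:ℝ) < (n:ℝ)*(ℓ:ℝ) := by
        rw [← hMR]; exact_mod_cast hM
      have hfl : ⌊((n:ℝ)*(ℓ:ℝ)*(q:ℝ) + ((n:ℝ)*(r:ℝ) + (j:ℝ))) / ((n:ℝ)*(ℓ:ℝ))⌋ = q := by
        rw [Int.floor_eq_iff]
        constructor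
        · rw [le_div_iff₀ hnlR]; nlinarith
        · rw [div_lt_iff₀ hnlR]; push_cast; nlinarith
      rw [hfl]
      exact iff_of_true (by omega) hM
    · have hMge : (n:ℝ)*(ℓ:ℝ) ≤ (n:ℝ)*(r:ℝ) + (j:ℝ) := by
        rw [← hMR]; exact_mod_cast (by omega : n*ℓ ≤ n*r + j)
      have hM2 : n*r + j < 2*(n*ℓ) := by
        have h1 : n*r < n*ℓ := by exact mul_lt_mul_of_pos_left hrl hn0
        omega
      have hM2R : (n:ℝ)*(r:ℝ) + (j:ℝ) < 2*((n:ℝ)*(ℓ:ℝ)) := by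
        rw [← hMR]; exact_mod_cast hM2
      have hfl : ⌊((n:ℝ)*(ℓ:ℝ)*(q:ℝ) + ((n:ℝ)*(r:ℝ) + (j:ℝ))) / ((n:ℝ)*(ℓ:ℝ))⌋ = q + 1 := by
        rw [Int.floor_eq_iff]
        push_cast
        constructor
        · rw [le_div_iff₀ hnlR]; nlinarith
        · rw [div_lt_iff₀ hnlR]; nlinarith
      rw [hfl]
      exact iff_of_false (by omega) hM
  rw [hA, hceil, hB, hiff, key10 ℓ n a t j hℓ3 hn hj1 hj2 ht h3a h3a' hnd]
  simp only [Set.mem_union, Set.mem_Ioo, lt_div_iff₀ (by norm_num : (0:ℝ) < 4),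
    div_lt_iff₀ (by norm_num : (0:ℝ) < 3)]
  constructor <;> intro h <;>
    rcases h with (((⟨h1,h2⟩|⟨h1,h2⟩)|⟨h1,h2⟩)|⟨h1,h2⟩) <;>
    [exact Or.inl (Or.inl (Or.inl ⟨by exact_mod_cast h1, by exact_mod_cast h2⟩));
     exact Or.inl (Or.inl (Or.inr ⟨by exact_mod_cast h1, by exact_mod_cast h2⟩));
     exact Or.inl (Or.inr ⟨by exact_mod_cast h1, by exact_mod_cast h2⟩);
     exact Or.inr ⟨by exact_mod_cast h1, by exact_mod_cast h2⟩;
     exact Or.inl (Or.inl (Or.inl ⟨by exact_mod_cast h1, by exact_mod_cast h2⟩));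
     exact Or.inl (Or.inl (Or.inr ⟨by exact_mod_cast h1, by exact_mod_cast h2⟩));
     exact Or.inl (Or.inr ⟨by exact_mod_cast h1, by exact_mod_cast h2⟩);
     exact Or.inr ⟨by exact_mod_cast h1, by exact_mod_cast h2⟩]
end

section
/- Let ℓ > 3 be a prime, let n ≥ 1 be an integer with gcd(n, ℓ) = 1, and let k be an integer with 0 ≤ k ≤ n−1 and kℓ ≡ −3 (mod n). Define f(j) := ⌈j(kℓ+3)/(nℓ)⌉ − ⌊j(kℓ+4)/(nℓ)⌋. Let j be an integer with 1 ≤ j ≤ nℓ−1, ℓ ∤ j, and j ≡ aℓ (mod n) for an integer a with 0 ≤ a ≤ n−1 satisfying 2n ≤ 3a ≤ 3n−1. Then f(j) = 1 if and only if j lies in (0, ℓ(3a−2n)/4) ∪ (ℓ(3a−2n)/3, ℓ(3a−n)/4) ∪ (ℓ(3a−n)/3, 3ℓa/4) ∪ (aℓ, ℓ(n+3a)/4), where these are open real intervals. -/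
theorem statement11 (ℓ n k a j : ℤ) (hℓp : Prime ℓ) (hℓ3 : 3 < ℓ) (hn : 1 ≤ n)
    (hcop : IsCoprime n ℓ) (hk0 : 0 ≤ k) (hk1 : k ≤ n - 1)
    (hkℓ : k * ℓ ≡ -3 [ZMOD n])
    (hj1 : 1 ≤ j) (hj2 : j ≤ n * ℓ - 1) (hℓj : ¬ ℓ ∣ j)
    (ha0 : 0 ≤ a) (ha1 : a ≤ n - 1) (hja : j ≡ a * ℓ [ZMOD n])
    (h3a : 2 * n ≤ 3 * a) (h3a' : 3 * a ≤ 3 * n - 1) :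
    (⌈(j : ℝ) * ((k : ℝ) * (ℓ : ℝ) + 3) / ((n : ℝ) * (ℓ : ℝ))⌉
        - ⌊(j : ℝ) * ((k : ℝ) * (ℓ : ℝ) + 4) / ((n : ℝ) * (ℓ : ℝ))⌋ = 1)
      ↔ (j : ℝ) ∈
          Set.Ioo (0 : ℝ) ((ℓ : ℝ) * (3 * (a : ℝ) - 2 * (n : ℝ)) / 4)
          ∪ Set.Ioo ((ℓ : ℝ) * (3 * (a : ℝ) - 2 * (n : ℝ)) / 3)
              ((ℓ : ℝ) * (3 * (a : ℝ) - (n : ℝ)) / 4)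
          ∪ Set.Ioo ((ℓ : ℝ) * (3 * (a : ℝ) - (n : ℝ)) / 3) (3 * (ℓ : ℝ) * (a : ℝ) / 4)
          ∪ Set.Ioo ((a : ℝ) * (ℓ : ℝ)) ((ℓ : ℝ) * ((n : ℝ) + 3 * (a : ℝ)) / 4) := by
  have hl0 : (0:ℤ) < ℓ := by linarith
  have hn0 : (0:ℤ) < n := hn
  have hl0R : (0:ℝ) < (ℓ:ℝ) := by exact_mod_cast hl0
  have hn0R : (0:ℝ) < (n:ℝ) := by exact_mod_cast hn0
  have hnl : (0:ℝ) < (n:ℝ) * (ℓ:ℝ) := mul_pos hn0R hl0R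
  -- t with k*ℓ + 3 = n * t
  obtain ⟨t, ht⟩ : n ∣ k * ℓ + 3 := by
    obtain ⟨c, hc⟩ := hkℓ.dvd
    exact ⟨-c, by linear_combination -hc⟩
  -- b with j - a*ℓ = n * b
  obtain ⟨b, hb⟩ : n ∣ j - a * ℓ := by
    obtain ⟨c, hc⟩ := hja.dvd
    exact ⟨-c, by linear_combination -hc⟩
  have hlt : ¬ ℓ ∣ t := by
    intro h
    have h1 : ℓ ∣ k * ℓ + 3 := ht ▸ (h.mul_left n)
    have h3 : ℓ ∣ 3 := (dvd_add_right (dvd_mul_left ℓ k)).mp h1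
    have := Int.le_of_dvd (by norm_num) h3
    linarith
  have hljt : ¬ ℓ ∣ j * t := by
    intro h
    rcases hℓp.dvd_mul.mp h with h | h
    · exact hℓj h
    · exact hlt h
  set q := j * t / ℓ with hqdef
  set r := j * t % ℓ with hrdef
  have hqr : j * t = ℓ * q + r := (Int.mul_ediv_add_emod (j*t) ℓ).symm
  have hr0 : 0 < r := lt_of_le_of_ne (Int.emod_nonneg _ (ne_of_gt hl0))
    (fun h => hljt (Int.dvd_of_emod_eq_zero h.symm))
  have hr1 : r < ℓ := Int.emod_lt_of_pos _ hl0
  -- the ceiling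
  have e1 : (j : ℝ) * ((k : ℝ) * (ℓ : ℝ) + 3) / ((n : ℝ) * (ℓ : ℝ))
      = (r:ℝ)/(ℓ:ℝ) + (q:ℝ) := by
    have h : (j * (k*ℓ+3) : ℤ) = n * (ℓ*q + r) := by rw [ht, ← hqr]; ring
    have hR : (j:ℝ) * ((k:ℝ)*(ℓ:ℝ)+3) = (n:ℝ) * ((ℓ:ℝ)*(q:ℝ)+(r:ℝ)) := by
      exact_mod_cast h
    rw [hR]
    field_simp
    ring
  have hceil : ⌈(j : ℝ) * ((k : ℝ) * (ℓ : ℝ) + 3) / ((n : ℝ) * (ℓ : ℝ))⌉ = q + 1 := by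
    rw [e1, Int.ceil_add_intCast]
    have h1 : ⌈(r:ℝ)/(ℓ:ℝ)⌉ = 1 := by
      rw [Int.ceil_eq_iff]
      constructor
      · push_cast
        have : (0:ℝ) < (r:ℝ)/(ℓ:ℝ) := div_pos (by exact_mod_cast hr0) hl0R
        linarith
      · push_cast
        rw [div_le_one hl0R]
        exact_mod_cast hr1.le
    rw [h1, add_comm]
  -- the floor
  have e2 : (j : ℝ) * ((k : ℝ) * (ℓ : ℝ) + 4) / ((n : ℝ) * (ℓ : ℝ))
      = ((n*r+j : ℤ):ℝ)/((n:ℝ)*(ℓ:ℝ)) + (q:ℝ) := by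
    have h : (j * (k*ℓ+4) : ℤ) = (n*ℓ)*q + (n*r+j) := by
      linear_combination j*ht + n*hqr
    have hR : (j:ℝ) * ((k:ℝ)*(ℓ:ℝ)+4) = ((n:ℝ)*(ℓ:ℝ))*(q:ℝ) + ((n*r+j:ℤ):ℝ) := by
      exact_mod_cast h
    rw [hR]
    field_simp
    ring
  rw [hceil, e2, Int.floor_add_intCast]
  have hnrj0 : (0:ℤ) ≤ n * r + j := by linarith [mul_nonneg hn0.le hr0.le]
  have hnrj2 : n * r + j < 2 * (n * ℓ) := by
    have h1 : n * r ≤ n * (ℓ - 1) :=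
      mul_le_mul_of_nonneg_left (by linarith) hn0.le
    linarith [h1]
  have hiff : (q + 1 - (⌊((n*r+j : ℤ):ℝ)/((n:ℝ)*(ℓ:ℝ))⌋ + q) = 1)
      ↔ n * r + j < n * ℓ := by
    constructor
    · intro h
      by_contra hc
      push_neg at hc
      have h1 : ⌊((n*r+j : ℤ):ℝ)/((n:ℝ)*(ℓ:ℝ))⌋ = 1 := by
        rw [Int.floor_eq_iff]
        constructor
        · rw [le_div_iff₀ hnl]
          push_cast
          have : ((n*ℓ:ℤ):ℝ) ≤ ((n*r+j:ℤ):ℝ) := by exact_mod_cast hc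
          push_cast at this
          linarith
        · rw [div_lt_iff₀ hnl]
          have : ((n*r+j:ℤ):ℝ) < ((2*(n*ℓ):ℤ):ℝ) := by exact_mod_cast hnrj2
          push_cast at this ⊢
          linarith
      rw [h1] at h
      omega
    · intro h
      have h0 : ⌊((n*r+j : ℤ):ℝ)/((n:ℝ)*(ℓ:ℝ))⌋ = 0 := by
        rw [Int.floor_eq_zero_iff, Set.mem_Ico]
        constructor
        · exact div_nonneg (by exact_mod_cast hnrj0) hnl.le
        · rw [div_lt_one hnl]
          exact_mod_cast h
      rw [h0]
      ring
  rw [hiff]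
  simp only [Set.mem_union, Set.mem_Ioo]
  -- key integer facts
  have hb3 : n * (3*b) = 3*j - 3*(a*ℓ) := by linear_combination (-3 : ℤ) * hb
  have hrb : r = (3*b) % ℓ := by
    have hjt : j * t = 3*b + ℓ*(a*t + b*k) := by
      linear_combination t*hb - b*ht
    rw [hrdef, hjt, Int.add_mul_emod_self_left]
  have hlb : ¬ ℓ ∣ b := by
    intro h
    apply hℓj
    have hj : j = a*ℓ + n*b := by linarith
    rw [hj]
    exact dvd_add (dvd_mul_left ℓ a) (h.mul_left n)
  have hl3 : ¬ (ℓ:ℤ) ∣ 3 := fun h => by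
    have := Int.le_of_dvd (by norm_num) h
    linarith
  have h3b1 : 3*b ≠ 0 := by
    intro h
    exact hlb (by
      have hb0 : b = 0 := by omega
      simp [hb0])
  have h3b2 : 3*b ≠ -ℓ := by
    intro h
    have hdvd : ℓ ∣ 3*b := ⟨-1, by omega⟩
    rcases hℓp.dvd_mul.mp hdvd with h' | h'
    · exact hl3 h'
    · exact hlb h'
  have h3b3 : 3*b ≠ -2*ℓ := by
    intro h
    have hdvd : ℓ ∣ 3*b := ⟨-2, by omega⟩
    rcases hℓp.dvd_mul.mp hdvd with h' | h'
    · exact hl3 h'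
    · exact hlb h'
  have hAle : a*ℓ ≤ (n-1)*ℓ := mul_le_mul_of_nonneg_right ha1 hl0.le
  have hAge : 2*(n*ℓ) ≤ 3*(a*ℓ) := by linarith [mul_le_mul_of_nonneg_right h3a hl0.le]
  have hA0 : (0:ℤ) ≤ a*ℓ := mul_nonneg ha0 hl0.le
  have hlow : -3*ℓ < 3*b := by
    have h : n*(-3*ℓ) < n*(3*b) := by linarith [hb3, hAle, hj1]
    exact lt_of_mul_lt_mul_left h hn0.le
  have hhigh : 3*b < ℓ := by
    have h : n*(3*b) < n*ℓ := by linarith [hb3, hAge, hj2]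
    exact lt_of_mul_lt_mul_left h hn0.le
  -- real versions of global facts
  have hR1 : (1:ℝ) ≤ (j:ℝ) := by exact_mod_cast hj1
  have hR2 : (j:ℝ) ≤ (n:ℝ)*(ℓ:ℝ) - 1 := by exact_mod_cast hj2
  have hRA0 : (0:ℝ) ≤ (a:ℝ)*(ℓ:ℝ) := by exact_mod_cast hA0
  have hRAge : 2*((n:ℝ)*(ℓ:ℝ)) ≤ 3*((a:ℝ)*(ℓ:ℝ)) := by exact_mod_cast hAge
  have hRAle : (a:ℝ)*(ℓ:ℝ) ≤ ((n:ℝ)-1)*(ℓ:ℝ) := by exact_mod_cast hAle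
  have htri : (0 < 3*b ∧ 3*b < ℓ) ∨ (-ℓ < 3*b ∧ 3*b < 0)
      ∨ (-2*ℓ < 3*b ∧ 3*b < -ℓ) ∨ (-3*ℓ < 3*b ∧ 3*b < -2*ℓ) := by omega
  rcases htri with ⟨h1, h2⟩ | ⟨h1, h2⟩ | ⟨h1, h2⟩ | ⟨h1, h2⟩
  · -- case 0 < 3b < ℓ : r = 3b, interval (aℓ, ℓ(n+3a)/4)
    have hrv : r = 3*b := by rw [hrb]; exact Int.emod_eq_of_lt (by linarith) h2
    have hcnd : n * r + j < n * ℓ ↔ 4*j < n*ℓ + 3*(a*ℓ) := by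
      rw [hrv]; constructor <;> intro h <;> linarith [hb3]
    rw [hcnd]
    have hc1 : (0:ℤ) < 3*j - 3*(a*ℓ) := by linarith [mul_pos hn0 h1, hb3]
    have hc2 : 3*j - 3*(a*ℓ) < n*ℓ := by
      linarith [mul_lt_mul_of_pos_left h2 hn0, hb3]
    have hc1R : (0:ℝ) < 3*(j:ℝ) - 3*((a:ℝ)*(ℓ:ℝ)) := by exact_mod_cast hc1
    have hc2R : 3*(j:ℝ) - 3*((a:ℝ)*(ℓ:ℝ)) < (n:ℝ)*(ℓ:ℝ) := by exact_mod_cast hc2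
    constructor
    · intro h
      have hR : 4*(j:ℝ) < (n:ℝ)*(ℓ:ℝ) + 3*((a:ℝ)*(ℓ:ℝ)) := by exact_mod_cast h
      exact Or.inr ⟨by linarith, by linarith⟩
    · rintro (((⟨u1, u2⟩ | ⟨u1, u2⟩) | ⟨u1, u2⟩) | ⟨u1, u2⟩)
      · exfalso; linarith
      · exfalso; linarith
      · exfalso; linarith
      · have hR : 4*(j:ℝ) < (n:ℝ)*(ℓ:ℝ) + 3*((a:ℝ)*(ℓ:ℝ)) := by linarith
        exact_mod_cast hR
  · -- case -ℓ < 3b < 0 : r = 3b + ℓ, interval (ℓ(3a-n)/3, 3ℓa/4)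
    have hrv : r = 3*b + ℓ := by
      have h' : (3*b) % ℓ = (3*b + ℓ*1) % ℓ := (Int.add_mul_emod_self_left (a := 3*b) (b := ℓ) (c := 1)).symm
      have h'' : 3*b + ℓ*1 = 3*b + ℓ := by ring
      rw [hrb, h', h'']
      exact Int.emod_eq_of_lt (by linarith) (by linarith)
    have hcnd : n * r + j < n * ℓ ↔ 4*j < 3*(a*ℓ) := by
      rw [hrv]; constructor <;> intro h <;> linarith [hb3]
    rw [hcnd]
    have hc1 : -(n*ℓ) < 3*j - 3*(a*ℓ) := by
      linarith [mul_lt_mul_of_pos_left h1 hn0, hb3]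
    have hc2 : 3*j - 3*(a*ℓ) < 0 := by
      linarith [mul_lt_mul_of_pos_left h2 hn0, hb3]
    have hc1R : -((n:ℝ)*(ℓ:ℝ)) < 3*(j:ℝ) - 3*((a:ℝ)*(ℓ:ℝ)) := by exact_mod_cast hc1
    have hc2R : 3*(j:ℝ) - 3*((a:ℝ)*(ℓ:ℝ)) < 0 := by exact_mod_cast hc2
    constructor
    · intro h
      have hR : 4*(j:ℝ) < 3*((a:ℝ)*(ℓ:ℝ)) := by exact_mod_cast h
      exact Or.inl (Or.inr ⟨by linarith, by linarith⟩)
    · rintro (((⟨u1, u2⟩ | ⟨u1, u2⟩) | ⟨u1, u2⟩) | ⟨u1, u2⟩)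
      · exfalso; linarith
      · exfalso; linarith
      · have hR : 4*(j:ℝ) < 3*((a:ℝ)*(ℓ:ℝ)) := by linarith
        exact_mod_cast hR
      · exfalso; linarith
  · -- case -2ℓ < 3b < -ℓ : r = 3b + 2ℓ, interval (ℓ(3a-2n)/3, ℓ(3a-n)/4)
    have hrv : r = 3*b + 2*ℓ := by
      have h' : (3*b) % ℓ = (3*b + ℓ*2) % ℓ := (Int.add_mul_emod_self_left (a := 3*b) (b := ℓ) (c := 2)).symm
      have h'' : 3*b + ℓ*2 = 3*b + 2*ℓ := by ring
      rw [hrb, h', h'']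
      exact Int.emod_eq_of_lt (by linarith) (by linarith)
    have hcnd : n * r + j < n * ℓ ↔ 4*j < 3*(a*ℓ) - n*ℓ := by
      rw [hrv]; constructor <;> intro h <;> linarith [hb3]
    rw [hcnd]
    have hc1 : -(2*(n*ℓ)) < 3*j - 3*(a*ℓ) := by
      linarith [mul_lt_mul_of_pos_left h1 hn0, hb3]
    have hc2 : 3*j - 3*(a*ℓ) < -(n*ℓ) := by
      linarith [mul_lt_mul_of_pos_left h2 hn0, hb3]
    have hc1R : -(2*((n:ℝ)*(ℓ:ℝ))) < 3*(j:ℝ) - 3*((a:ℝ)*(ℓ:ℝ)) := by exact_mod_cast hc1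
    have hc2R : 3*(j:ℝ) - 3*((a:ℝ)*(ℓ:ℝ)) < -((n:ℝ)*(ℓ:ℝ)) := by exact_mod_cast hc2
    constructor
    · intro h
      have hR : 4*(j:ℝ) < 3*((a:ℝ)*(ℓ:ℝ)) - (n:ℝ)*(ℓ:ℝ) := by exact_mod_cast h
      exact Or.inl (Or.inl (Or.inr ⟨by linarith, by linarith⟩))
    · rintro (((⟨u1, u2⟩ | ⟨u1, u2⟩) | ⟨u1, u2⟩) | ⟨u1, u2⟩)
      · exfalso; linarith
      · have hR : 4*(j:ℝ) < 3*((a:ℝ)*(ℓ:ℝ)) - (n:ℝ)*(ℓ:ℝ) := by linarith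
        exact_mod_cast hR
      · exfalso; linarith
      · exfalso; linarith
  · -- case -3ℓ < 3b < -2ℓ : r = 3b + 3ℓ, interval (0, ℓ(3a-2n)/4)
    have hrv : r = 3*b + 3*ℓ := by
      have h' : (3*b) % ℓ = (3*b + ℓ*3) % ℓ := (Int.add_mul_emod_self_left (a := 3*b) (b := ℓ) (c := 3)).symm
      have h'' : 3*b + ℓ*3 = 3*b + 3*ℓ := by ring
      rw [hrb, h', h'']
      exact Int.emod_eq_of_lt (by linarith) (by linarith)
    have hcnd : n * r + j < n * ℓ ↔ 4*j < 3*(a*ℓ) - 2*(n*ℓ) := by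
      rw [hrv]; constructor <;> intro h <;> linarith [hb3]
    rw [hcnd]
    have hc2 : 3*j - 3*(a*ℓ) < -(2*(n*ℓ)) := by
      linarith [mul_lt_mul_of_pos_left h2 hn0, hb3]
    have hc2R : 3*(j:ℝ) - 3*((a:ℝ)*(ℓ:ℝ)) < -(2*((n:ℝ)*(ℓ:ℝ))) := by exact_mod_cast hc2
    constructor
    · intro h
      have hR : 4*(j:ℝ) < 3*((a:ℝ)*(ℓ:ℝ)) - 2*((n:ℝ)*(ℓ:ℝ)) := by exact_mod_cast h
      exact Or.inl (Or.inl (Or.inl ⟨by linarith, by linarith⟩))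
    · rintro (((⟨u1, u2⟩ | ⟨u1, u2⟩) | ⟨u1, u2⟩) | ⟨u1, u2⟩)
      · have hR : 4*(j:ℝ) < 3*((a:ℝ)*(ℓ:ℝ)) - 2*((n:ℝ)*(ℓ:ℝ)) := by linarith
        exact_mod_cast hR
      · exfalso; linarith
      · exfalso; linarith
      · exfalso; linarith
end

section
/- Let ℓ be a prime with ℓ ≡ 1 (mod 4). Then q(0, ℓ/4) + q(ℓ/3, ℓ/2) + q(2ℓ/3, 3ℓ/4) = 0; equivalently, the number of quadratic residues modulo ℓ in (0, ℓ/4) ∪ (ℓ/3, ℓ/2) ∪ (2ℓ/3, 3ℓ/4) equals the number of quadratic nonresidues modulo ℓ in this union. -/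
/-- The quadratic excess `q(a,b)`: the sum of Legendre symbols `(m/ℓ)` over the
integers `m` strictly between the real numbers `a` and `b`. -/
noncomputable def quadExcess (ℓ : ℕ) [Fact ℓ.Prime] (a b : ℝ) : ℤ :=
  ∑ m ∈ Finset.Ioo ⌊a⌋ ⌈b⌉, legendreSym ℓ m

section Aux
variable (ℓ : ℕ) [hp : Fact ℓ.Prime]

lemma leg_neg_one (h1 : ℓ % 4 = 1) : legendreSym ℓ (-1) = 1 := by
  have h2 : ℓ ≠ 2 := by omega
  rw [legendreSym.at_neg_one h2, ZMod.χ₄_nat_one_mod_four h1]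

lemma leg_refl (h1 : ℓ % 4 = 1) (m : ℤ) :
    legendreSym ℓ ((ℓ : ℤ) - m) = legendreSym ℓ m := by
  have hℓ : (0:ℤ) < (ℓ:ℤ) := by exact_mod_cast hp.out.pos
  have : ((ℓ:ℤ) - m) % ℓ = (-m) % ℓ := by
    rw [show (ℓ:ℤ) - m = -m + (ℓ:ℤ) * 1 by ring, Int.add_mul_emod_self_left]
  rw [legendreSym.mod, this, ← legendreSym.mod, show (-m) = -1 * m by ring,
    legendreSym.mul, leg_neg_one ℓ h1, one_mul]

lemma sum_refl (h1 : ℓ % 4 = 1) (a b : ℤ) :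
    ∑ m ∈ Finset.Ioo a b, legendreSym ℓ m
      = ∑ m ∈ Finset.Ioo ((ℓ:ℤ) - b) ((ℓ:ℤ) - a), legendreSym ℓ m := by
  refine Finset.sum_nbij' (fun m => (ℓ:ℤ) - m) (fun m => (ℓ:ℤ) - m) ?_ ?_ ?_ ?_ ?_ <;>
    intro x hx <;> simp only [Finset.mem_Ioo] at * <;>
    first | omega | (exact (leg_refl ℓ h1 x).symm)

lemma sum_total (h1 : ℓ % 4 = 1) :
    ∑ m ∈ Finset.Ioo (0:ℤ) (ℓ:ℤ), legendreSym ℓ m = 0 := by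
  have h2 : ℓ ≠ 2 := by omega
  have hne : NeZero ℓ := ⟨hp.out.ne_zero⟩
  have key : ∑ m ∈ Finset.Ico (0:ℤ) (ℓ:ℤ), legendreSym ℓ m
      = ∑ a : ZMod ℓ, quadraticChar (ZMod ℓ) a := by
    refine Finset.sum_nbij' (fun m => ((m : ZMod ℓ))) (fun a => (a.val : ℤ)) ?_ ?_ ?_ ?_ ?_
    · intro x hx; simp
    · intro a _
      simp only [Finset.mem_Ico]
      constructor
      · positivity
      · exact_mod_cast ZMod.val_lt a
    · intro x hx
      simp only [Finset.mem_Ico] at hx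
      show ((x : ZMod ℓ).val : ℤ) = x
      rw [ZMod.val_intCast]
      exact Int.emod_eq_of_lt hx.1 hx.2
    · intro a _
      simp [ZMod.natCast_val, ZMod.cast_id]
    · intro x hx
      rfl
  have hchar : ringChar (ZMod ℓ) ≠ 2 := by
    rw [ZMod.ringChar_zmod_n]; omega
  have : Finset.Ico (0:ℤ) (ℓ:ℤ) = insert 0 (Finset.Ioo (0:ℤ) (ℓ:ℤ)) := by
    ext x
    simp only [Finset.mem_Ico, Finset.mem_insert, Finset.mem_Ioo]
    have : (0:ℤ) < ℓ := by exact_mod_cast hp.out.pos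
    omega
  rw [this, Finset.sum_insert (by simp), legendreSym.at_zero, zero_add,
    quadraticChar_sum_zero hchar] at key
  exact key

end Aux

section Main
variable (ℓ : ℕ) [hp : Fact ℓ.Prime]

lemma sumIocCons (f : ℤ → ℤ) {a b c : ℤ} (hab : a ≤ b) (hbc : b ≤ c) :
    (∑ m ∈ Finset.Ioc a b, f m) + (∑ m ∈ Finset.Ioc b c, f m)
      = ∑ m ∈ Finset.Ioc a c, f m := by
  rw [← Finset.Ioc_union_Ioc_eq_Ioc hab hbc, Finset.sum_union]
  exact Finset.disjoint_left.2 fun x hx hx' => by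
    simp only [Finset.mem_Ioc] at hx hx'; omega

lemma ioo_eq_ioc (a b : ℤ) : Finset.Ioo a (b+1) = Finset.Ioc a b := by
  ext x; simp only [Finset.mem_Ioo, Finset.mem_Ioc]; omega

lemma main_aux (h1 : ℓ % 4 = 1) (a b c : ℤ) (h0 : 0 ≤ a) (hab : a ≤ b) (hbc : b ≤ c)
    (hc : (ℓ:ℤ) = 2*c+1) :
    ∑ m ∈ Finset.Ioo 0 (a+1), legendreSym ℓ m
      + ∑ m ∈ Finset.Ioo b (c+1), legendreSym ℓ m
      + ∑ m ∈ Finset.Ioo ((ℓ:ℤ)-(b+1)) ((ℓ:ℤ)-a), legendreSym ℓ m = 0 := by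
  rw [sum_refl ℓ h1 ((ℓ:ℤ)-(b+1)) ((ℓ:ℤ)-a)]
  rw [show (ℓ:ℤ) - ((ℓ:ℤ)-a) = a by ring, show (ℓ:ℤ) - ((ℓ:ℤ)-(b+1)) = b+1 by ring]
  rw [ioo_eq_ioc, ioo_eq_ioc, ioo_eq_ioc]
  have hmerge : ∑ m ∈ Finset.Ioc 0 a, legendreSym ℓ m
      + ∑ m ∈ Finset.Ioc b c, legendreSym ℓ m
      + ∑ m ∈ Finset.Ioc a b, legendreSym ℓ m
      = ∑ m ∈ Finset.Ioc 0 c, legendreSym ℓ m := by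
    rw [← sumIocCons (fun m : ℤ => legendreSym ℓ m) (le_trans h0 hab) hbc,
      ← sumIocCons (fun m : ℤ => legendreSym ℓ m) h0 hab]
    ring
  rw [hmerge]
  have hrefl : ∑ m ∈ Finset.Ioc 0 c, legendreSym ℓ m
      = ∑ m ∈ Finset.Ioc c (2*c), legendreSym ℓ m := by
    rw [← ioo_eq_ioc, sum_refl ℓ h1 0 (c+1)]
    congr 1
    ext x
    simp only [Finset.mem_Ioo, Finset.mem_Ioc]
    omega
  have htot : ∑ m ∈ Finset.Ioc 0 c, legendreSym ℓ m
      + ∑ m ∈ Finset.Ioc c (2*c), legendreSym ℓ m = 0 := by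
    rw [sumIocCons (fun m : ℤ => legendreSym ℓ m) (by omega : (0:ℤ) ≤ c) (by omega : c ≤ 2*c)]
    rw [← ioo_eq_ioc, show 2*c+1 = (ℓ:ℤ) from hc.symm]
    exact sum_total ℓ h1
  omega

end Main

theorem statement13 (ℓ : ℕ) [Fact ℓ.Prime] (h1 : ℓ % 4 = 1) :
    quadExcess ℓ 0 ((ℓ : ℝ) / 4)
      + quadExcess ℓ ((ℓ : ℝ) / 3) ((ℓ : ℝ) / 2)
      + quadExcess ℓ (2 * (ℓ : ℝ) / 3) (3 * (ℓ : ℝ) / 4) = 0 := by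
  have hp : ℓ.Prime := Fact.out
  have h3 : ¬ (3 ∣ ℓ) := by
    intro hd
    rcases hp.eq_one_or_self_of_dvd 3 hd with h | h <;> omega
  have hr : ℓ % 12 = 1 ∨ ℓ % 12 = 5 := by omega
  obtain ⟨j, hj⟩ : ∃ j : ℕ, ℓ = 12 * j + (ℓ % 12) := ⟨ℓ / 12, by omega⟩
  have hjR : ((j:ℝ)) ≥ 0 := by positivity
  unfold quadExcess
  rcases hr with hr | hr <;> rw [hr] at hj
  · have hcR : (ℓ:ℝ) = 12*(j:ℝ)+1 := by rw [hj]; push_cast; ring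
    have hcZ : (ℓ:ℤ) = 12*(j:ℤ)+1 := by rw [hj]; push_cast; ring
    rw [hcR, Int.floor_zero]
    have e1 : ⌈(12*(j:ℝ)+1)/4⌉ = 3*(j:ℤ)+1 := by
      rw [Int.ceil_eq_iff] <;> push_cast <;> constructor <;> nlinarith
    have e2 : ⌊(12*(j:ℝ)+1)/3⌋ = 4*(j:ℤ) := by
      rw [Int.floor_eq_iff] <;> push_cast <;> constructor <;> nlinarith
    have e3 : ⌈(12*(j:ℝ)+1)/2⌉ = 6*(j:ℤ)+1 := by
      rw [Int.ceil_eq_iff] <;> push_cast <;> constructor <;> nlinarith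
    have e4 : ⌊2*(12*(j:ℝ)+1)/3⌋ = 8*(j:ℤ) := by
      rw [Int.floor_eq_iff] <;> push_cast <;> constructor <;> nlinarith
    have e5 : ⌈3*(12*(j:ℝ)+1)/4⌉ = 9*(j:ℤ)+1 := by
      rw [Int.ceil_eq_iff] <;> push_cast <;> constructor <;> nlinarith
    rw [e1, e2, e3, e4, e5]
    have := main_aux ℓ h1 (3*(j:ℤ)) (4*(j:ℤ)) (6*(j:ℤ)) (by omega) (by omega) (by omega) (by omega)
    rw [show (ℓ:ℤ) - (4*(j:ℤ)+1) = 8*(j:ℤ) by omega, show (ℓ:ℤ) - 3*(j:ℤ) = 9*(j:ℤ)+1 by omega] at this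
    convert this using 3 <;> omega
  · have hcR : (ℓ:ℝ) = 12*(j:ℝ)+5 := by rw [hj]; push_cast; ring
    have hcZ : (ℓ:ℤ) = 12*(j:ℤ)+5 := by rw [hj]; push_cast; ring
    rw [hcR, Int.floor_zero]
    have e1 : ⌈(12*(j:ℝ)+5)/4⌉ = 3*(j:ℤ)+2 := by
      rw [Int.ceil_eq_iff] <;> push_cast <;> constructor <;> nlinarith
    have e2 : ⌊(12*(j:ℝ)+5)/3⌋ = 4*(j:ℤ)+1 := by
      rw [Int.floor_eq_iff] <;> push_cast <;> constructor <;> nlinarith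
    have e3 : ⌈(12*(j:ℝ)+5)/2⌉ = 6*(j:ℤ)+3 := by
      rw [Int.ceil_eq_iff] <;> push_cast <;> constructor <;> nlinarith
    have e4 : ⌊2*(12*(j:ℝ)+5)/3⌋ = 8*(j:ℤ)+3 := by
      rw [Int.floor_eq_iff] <;> push_cast <;> constructor <;> nlinarith
    have e5 : ⌈3*(12*(j:ℝ)+5)/4⌉ = 9*(j:ℤ)+4 := by
      rw [Int.ceil_eq_iff] <;> push_cast <;> constructor <;> nlinarith
    rw [e1, e2, e3, e4, e5]
    have := main_aux ℓ h1 (3*(j:ℤ)+1) (4*(j:ℤ)+1) (6*(j:ℤ)+2) (by omega) (by omega) (by omega) (by omega)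
    rw [show (ℓ:ℤ) - (4*(j:ℤ)+1+1) = 8*(j:ℤ)+3 by omega, show (ℓ:ℤ) - (3*(j:ℤ)+1) = 9*(j:ℤ)+4 by omega] at this
    rw [show (3*(j:ℤ)+1+1) = 3*(j:ℤ)+2 by ring, show (6*(j:ℤ)+2+1) = 6*(j:ℤ)+3 by ring] at this
    convert this using 3 <;> omega
end

section
/- Assume Dickson's conjecture: for every k ≥ 1, all integers a_1, …, a_k, and all integers b_1, …, b_k ≥ 1, if there is no prime p that divides the product ∏_{i=1}^{k} (a_i + b_i·n) for every natural number n, then there are infinitely many natural numbers n such that a_i + b_i·n is prime for every 1 ≤ i ≤ k. Then for every m ≥ 1 there are infinitely many natural numbers n such that 2^i·n + 2^i − 1 is prime for every 0 ≤ i ≤ 2m − 1; that is, there are infinitely many Cunningham chains of the first kind of length 2m. -/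
theorem statement15
    (dickson : ∀ (k : ℕ), 1 ≤ k → ∀ (a b : Fin k → ℤ), (∀ i, 1 ≤ b i) →
      (¬ ∃ p : ℕ, p.Prime ∧ ∀ n : ℕ, (p : ℤ) ∣ ∏ i, (a i + b i * (n : ℤ))) →
      ∀ N : ℕ, ∃ n : ℕ, N < n ∧ ∀ i, Prime (a i + b i * (n : ℤ))) :
    ∀ m : ℕ, 1 ≤ m → ∀ N : ℕ, ∃ n : ℕ, N < n ∧
      ∀ i : ℕ, i ≤ 2 * m - 1 → Nat.Prime (2 ^ i * n + 2 ^ i - 1) := by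
  intro m hm N
  have hk : 1 ≤ 2 * m := by omega
  set a : Fin (2 * m) → ℤ := fun i => 2 ^ (i : ℕ) - 1 with ha
  set b : Fin (2 * m) → ℤ := fun i => 2 ^ (i : ℕ) with hb
  have hb1 : ∀ i, 1 ≤ b i := fun i => one_le_pow₀ one_le_two
  have hnodiv : ¬ ∃ p : ℕ, p.Prime ∧ ∀ n : ℕ, (p : ℤ) ∣ ∏ i, (a i + b i * (n : ℤ)) := by
    rintro ⟨p, hp, hdvd⟩
    haveI : Fact p.Prime := ⟨hp⟩
    have h := hdvd (p - 1)
    have hcast : ((p - 1 : ℕ) : ℤ) = (p : ℤ) - 1 := by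
      have := hp.two_le; push_cast [Nat.cast_sub (by omega : 1 ≤ p)]; ring
    have h0 : ((∏ i, (a i + b i * ((p - 1 : ℕ) : ℤ)) : ℤ) : ZMod p) = 0 := by
      exact_mod_cast (ZMod.intCast_zmod_eq_zero_iff_dvd _ p).2 (by exact_mod_cast hdvd (p-1))
    rw [Int.cast_prod] at h0
    have h1 : ∀ i : Fin (2 * m), ((a i + b i * ((p - 1 : ℕ) : ℤ) : ℤ) : ZMod p) = -1 := by
      intro i
      simp only [ha, hb, hcast]
      push_cast
      have : ((p : ℤ) : ZMod p) = 0 := by exact_mod_cast ZMod.natCast_self p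
      push_cast at this ⊢
      rw [this]
      ring
    rw [Finset.prod_congr rfl (fun i _ => h1 i)] at h0
    rw [Finset.prod_const, Finset.card_univ, Fintype.card_fin, pow_mul] at h0
    simp at h0
  obtain ⟨n, hn, hprime⟩ := dickson (2 * m) hk a b hb1 hnodiv N
  refine ⟨n, hn, ?_⟩
  intro i hi
  have hilt : i < 2 * m := by omega
  have := hprime ⟨i, hilt⟩
  simp only [ha, hb] at this
  have heq : ((2 ^ i * n + 2 ^ i - 1 : ℕ) : ℤ) = 2 ^ i - 1 + 2 ^ i * (n : ℤ) := by
    have h1 : 1 ≤ 2 ^ i * n + 2 ^ i := by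
      have : 1 ≤ 2 ^ i := Nat.one_le_two_pow
      omega
    push_cast [Nat.cast_sub h1]
    ring
  rw [Nat.prime_iff_prime_int, heq]
  exact this
end

section
/- Let m ≥ 1 be an integer and let ℓ be a prime with ℓ > 2^{2m−2} − 1. Suppose that ℓ_i := 2^{i−1}·(ℓ+1) − 1 is prime for every 1 ≤ i ≤ 2m (so ℓ_1 = ℓ and ℓ_1, …, ℓ_{2m} form a Cunningham chain of the first kind of length 2m). Define g_i := ℓ_{2i−1} = 2^{2i−2}·(ℓ+1) − 1 for 1 ≤ i ≤ m. Then each g_i is a Sophie Germain prime (both g_i and 2g_i + 1 are prime), and for all 1 ≤ i, j ≤ m with i ≠ j one has g_i ≠ 2g_j + 1 and g_i does not divide g_j − 1. -/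
theorem statement16 (m ℓ : ℕ) (hm : 1 ≤ m) (hℓ : ℓ.Prime)
    (hbig : 2 ^ (2 * m - 2) - 1 < ℓ)
    (hchain : ∀ i : ℕ, 1 ≤ i → i ≤ 2 * m → Nat.Prime (2 ^ (i - 1) * (ℓ + 1) - 1)) :
    (∀ i : ℕ, 1 ≤ i → i ≤ m →
        Nat.Prime (2 ^ (2 * i - 2) * (ℓ + 1) - 1) ∧
        Nat.Prime (2 * (2 ^ (2 * i - 2) * (ℓ + 1) - 1) + 1)) ∧
    (∀ i j : ℕ, 1 ≤ i → i ≤ m → 1 ≤ j → j ≤ m → i ≠ j →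
        2 ^ (2 * i - 2) * (ℓ + 1) - 1 ≠ 2 * (2 ^ (2 * j - 2) * (ℓ + 1) - 1) + 1 ∧
        ¬ (2 ^ (2 * i - 2) * (ℓ + 1) - 1) ∣ ((2 ^ (2 * j - 2) * (ℓ + 1) - 1) - 1)) := by
  have hL : 3 ≤ ℓ + 1 := by have := hℓ.two_le; omega
  refine ⟨?_, ?_⟩
  · intro i hi1 him
    refine ⟨?_, ?_⟩
    · have h := hchain (2 * i - 1) (by omega) (by omega)
      have e : 2 * i - 1 - 1 = 2 * i - 2 := by omega
      rwa [e] at h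
    · have h := hchain (2 * i) (by omega) (by omega)
      have e : 2 ^ (2 * i - 1) * (ℓ + 1) = 2 * (2 ^ (2 * i - 2) * (ℓ + 1)) := by
        rw [show 2 * i - 1 = 2 * i - 2 + 1 from by omega, pow_succ]; ring
      rw [e] at h
      have ha : 0 < 2 ^ (2 * i - 2) * (ℓ + 1) := by positivity
      set a := 2 ^ (2 * i - 2) * (ℓ + 1) with hadef
      have e2 : 2 * (a - 1) + 1 = 2 * a - 1 := by omega
      rwa [e2]
  · intro i j hi1 him hj1 hjm hij
    have ha : 0 < 2 ^ (2 * i - 2) * (ℓ + 1) := by positivity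
    have hb : 0 < 2 ^ (2 * j - 2) * (ℓ + 1) := by positivity
    have haL : ℓ + 1 ≤ 2 ^ (2 * i - 2) * (ℓ + 1) :=
      Nat.le_mul_of_pos_left _ (pow_pos two_pos _)
    have hbL : ℓ + 1 ≤ 2 ^ (2 * j - 2) * (ℓ + 1) :=
      Nat.le_mul_of_pos_left _ (pow_pos two_pos _)
    constructor
    · intro heq
      set A := 2 ^ (2 * i - 2) * (ℓ + 1) with hA
      set B := 2 ^ (2 * j - 2) * (ℓ + 1) with hB
      have heq2 : A = 2 * B := by omega
      rw [hA, hB, ← mul_assoc] at heq2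
      have heq3 : 2 ^ (2 * i - 2) = 2 * 2 ^ (2 * j - 2) :=
        Nat.eq_of_mul_eq_mul_right (by omega) heq2
      rw [show 2 * 2 ^ (2 * j - 2) = 2 ^ (2 * j - 2 + 1) from by rw [pow_succ]; ring] at heq3
      have := Nat.pow_right_injective (le_refl 2) heq3
      omega
    · intro hdvd
      set A := 2 ^ (2 * i - 2) * (ℓ + 1) with hA
      set B := 2 ^ (2 * j - 2) * (ℓ + 1) with hB
      rcases lt_or_gt_of_ne hij with hlt | hgt
      · -- i < j : modular argument
        set p := 2 ^ (2 * (j - i)) with hp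
        have hp4 : 4 ≤ p := by
          rw [hp]
          calc (4 : ℕ) = 2 ^ 2 := by norm_num
          _ ≤ 2 ^ (2 * (j - i)) := Nat.pow_le_pow_right (by norm_num) (by omega)
        have hbe : B = p * A := by
          rw [hA, hB, hp, ← mul_assoc, ← pow_add]
          congr 2
          omega
        have hple : p ≤ p * A := Nat.le_mul_of_pos_right _ ha
        have hdvd2 : (A - 1) ∣ (p * A - p) := by
          have : p * A - p = p * (A - 1) := by rw [Nat.mul_sub, mul_one]
          rw [this]
          exact Dvd.dvd.mul_left dvd_rfl _
        have key : B - 1 - 1 - (p * A - p) = p - 2 := by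
          rw [hbe]; omega
        have hdvd3 : (A - 1) ∣ (p - 2) := key ▸ Nat.dvd_sub hdvd hdvd2
        have hle := Nat.le_of_dvd (by omega) hdvd3
        have hpm : p ≤ 2 ^ (2 * m - 2) := by
          rw [hp]
          exact Nat.pow_le_pow_right (by norm_num) (by omega)
        omega
      · -- i > j : size argument
        have h4 : 4 * B ≤ A := by
          rw [hA, hB, ← mul_assoc]
          have h5 : 4 * 2 ^ (2 * j - 2) ≤ 2 ^ (2 * i - 2) := by
            calc 4 * 2 ^ (2 * j - 2) = 2 ^ (2 * j - 2 + 2) := by rw [pow_add]; ring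
            _ ≤ 2 ^ (2 * i - 2) := Nat.pow_le_pow_right (by norm_num) (by omega)
          exact Nat.mul_le_mul_right _ h5
        have := Nat.le_of_dvd (by omega) hdvd
        omega
end
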